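/- arXiv:1102.2641 — 7 statements merged into one kernel-verified Lean document; each statement's English description precedes it below -/
import Mathlib

section
/- Let d > −1 with d ≠ 0 and let p be a probability vector on n ≥ 2 symbols sorted so that p_1 ≥ p_2 ≥ … ≥ p_n. If p_1 ≤ f^d(p_{n−1}, p_n), then there exists a codeword-length vector l attaining the optimal exponential redundancy R^d_opt(p) such that ∑_i 2^(−l_i) = 1 and every l_i equals either ⌊log₂ n⌋ or ⌈log₂ n⌉ (i.e., the optimal code can be represented by a complete tree). -/
open Real Finset

/-- A valid codeword-length vector: all lengths at least 1 and the Kraft inequality holds. -/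
def IsCode (n : ℕ) (l : Fin n → ℕ) : Prop :=
  (∀ i, 1 ≤ l i) ∧ ∑ i, (2 : ℝ) ^ (-(l i : ℝ)) ≤ 1

/-- Exponential redundancy `R^d(p,l)`. -/
noncomputable def expRedundancy (n : ℕ) (d : ℝ) (p : Fin n → ℝ) (l : Fin n → ℕ) : ℝ :=
  (1 / d) * Real.logb 2 (∑ i, (p i) ^ (1 + d) * (2 : ℝ) ^ (d * (l i : ℝ)))

/-- Optimal exponential redundancy `R^d_opt(p)`. -/
noncomputable def expRedundancyOpt (n : ℕ) (d : ℝ) (p : Fin n → ℝ) : ℝ :=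
  sInf { r | ∃ l : Fin n → ℕ, IsCode n l ∧ r = expRedundancy n d p l }

/-- The Huffman-like combining function `f^d(x,y)`. -/
noncomputable def combine (d x y : ℝ) : ℝ :=
  ((2 : ℝ) ^ d * x ^ (1 + d) + (2 : ℝ) ^ d * y ^ (1 + d)) ^ (1 / (1 + d))

/-!
For `d ≠ 0`, minimizing `R^d(p, l)` means minimizing `sign d * ∑ pᵢ^(1+d) 2^(d lᵢ)`, a cost with
weights `wᵢ = pᵢ^(1+d)` decreasing in `i`. We descend on `∑ lᵢ`. By rearrangement the lengths may
be taken increasing. If the Kraft sum is `< 1`, integrality lets the longest word lose a bit. If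
the code is complete but its depths differ by at least 2, the two deepest leaves are siblings;
merging them and splitting the shallowest leaf instead does not increase the cost precisely
because `w₁ ≤ 2^d (w_{n-1} + w_n)`. What remains, a sorted complete code with depths in
`{u, u + 1}`, is forced by the Kraft equation to be the balanced code with `u = ⌊log₂ n⌋`.
-/

open Function

theorem Finset.sum_apply_update {ι M : Type*} [Fintype ι] [DecidableEq ι] [AddCommGroup M]
    {α : Type*} (F : ι → α → M) (l : ι → α) (i : ι) (v : α) :
    ∑ j, F j (update l i v j) = ∑ j, F j (l j) + (F i v - F i (l i)) := by
  rw [← add_sum_erase _ _ (mem_univ i), ← add_sum_erase _ _ (mem_univ i), update_self,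
    sum_congr rfl fun j hj => by rw [update_of_ne (ne_of_mem_erase hj)]]
  abel

theorem Real.two_rpow_neg_natCast (k : ℕ) : (2 : ℝ) ^ (-(k : ℝ)) = ((2 : ℝ) ^ k)⁻¹ := by
  rw [Real.rpow_neg zero_le_two, Real.rpow_natCast]

theorem monotone_sign_mul_two_rpow (d : ℝ) :
    Monotone fun x : ℝ => Real.sign d * (2 : ℝ) ^ (d * x) := by
  intro x y hxy
  rcases lt_trichotomy d 0 with hd | rfl | hd
  · simp only [Real.sign_of_neg hd, neg_one_mul, neg_le_neg_iff]
    exact Real.rpow_le_rpow_of_exponent_le one_le_two (by nlinarith)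
  · simp [Real.sign_zero]
  · simp only [Real.sign_of_pos hd, one_mul]
    exact Real.rpow_le_rpow_of_exponent_le one_le_two (by nlinarith)

-- The cost comparison behind `exchangeLengths`, with `c = 2 ^ d`, `a = φ (l i₀)`,
-- `b = φ (l i₂ - 1)` for the monotone `φ x = sign d * 2 ^ (d * x)`, so `φ (x + 1) = c * φ x`.
theorem exchange_ineq {a b c w₀ w₁ w₂ : ℝ} (hc : 1 / 2 ≤ c) (ha : a ≤ c * a) (hab : c * a ≤ b)
    (hw₂ : 0 ≤ w₂) (hw₁₂ : w₂ ≤ w₁) (hw₀ : w₀ ≤ c * (w₁ + w₂)) :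
    w₀ * (c * a) + w₁ * (c * a) + w₂ * b ≤ w₀ * a + w₁ * (c * b) + w₂ * (c * b) := by
  nlinarith [mul_le_mul_of_nonneg_right hw₀ (sub_nonneg.2 ha),
    mul_nonneg (sub_nonneg.2 hab) (by nlinarith : 0 ≤ c * w₁ + (c - 1) * w₂)]

section Codes

variable {n : ℕ}

noncomputable def kraftSum (l : Fin n → ℕ) : ℝ := ∑ i, (2 : ℝ) ^ (-(l i : ℝ))

noncomputable def expCost (d : ℝ) (w : Fin n → ℝ) (l : Fin n → ℕ) : ℝ :=
  ∑ i, w i * (2 : ℝ) ^ (d * (l i : ℝ))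

def twoLevelLengths (n A u : ℕ) : Fin n → ℕ := fun i => if (i : ℕ) < A then u else u + 1

def balancedLengths (n : ℕ) : Fin n → ℕ :=
  twoLevelLengths n (2 ^ (Nat.log 2 n + 1) - n) (Nat.log 2 n)

theorem pow_mul_kraftSum {l : Fin n → ℕ} {L : ℕ} (hL : ∀ i, l i ≤ L) :
    (2 : ℝ) ^ L * kraftSum l = ((∑ i, 2 ^ (L - l i) : ℕ) : ℝ) := by
  rw [kraftSum, mul_sum]
  push_cast
  refine sum_congr rfl fun i _ => ?_
  rw [Real.two_rpow_neg_natCast, pow_sub₀ _ two_ne_zero (hL i)]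

theorem kraftSum_twoLevelLengths {A : ℕ} (u : ℕ) (hA : A ≤ n) :
    kraftSum (twoLevelLengths n A u) = (A + n) / 2 ^ (u + 1) := by
  have h := Fin.sum_univ_eq_sum_range
    (fun i => if i < A then ((2 : ℝ) ^ u)⁻¹ else ((2 : ℝ) ^ (u + 1))⁻¹) n
  rw [kraftSum]
  simp only [twoLevelLengths, apply_ite (fun k : ℕ => (2 : ℝ) ^ (-(k : ℝ))),
    Real.two_rpow_neg_natCast] at h ⊢
  rw [h, ← Nat.add_sub_cancel' hA, sum_range_add,
    sum_congr rfl fun i hi => if_pos (mem_range.1 hi),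
    sum_congr rfl fun i _ => if_neg (Nat.not_lt.2 (Nat.le_add_right A i))]
  simp only [sum_const, card_range, nsmul_eq_mul, pow_succ]
  push_cast
  field_simp
  ring

theorem kraftSum_balancedLengths (hn : 0 < n) : kraftSum (balancedLengths n) = 1 := by
  have hlt : n < 2 ^ (Nat.log 2 n + 1) := Nat.lt_pow_succ_log_self one_lt_two n
  have hle : 2 ^ Nat.log 2 n ≤ n := Nat.pow_log_le_self 2 hn.ne'
  rw [balancedLengths, kraftSum_twoLevelLengths _ (by rw [pow_succ]; omega),
    Nat.cast_sub hlt.le]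
  push_cast
  simp

theorem isCode_balancedLengths (hn : 1 < n) : IsCode n (balancedLengths n) := by
  have hlog : 1 ≤ Nat.log 2 n := Nat.log_pos one_lt_two hn
  refine ⟨fun i => ?_, (kraftSum_balancedLengths (by omega)).le⟩
  unfold balancedLengths twoLevelLengths
  split_ifs <;> omega

theorem balancedLengths_eq_log_or_clog (i : Fin n) :
    balancedLengths n i = Nat.log 2 n ∨ balancedLengths n i = Nat.clog 2 n := by
  unfold balancedLengths twoLevelLengths
  split_ifs with hi
  · exact .inl rfl
  refine .inr (le_antisymm ?_ ?_)
  · have hlog : 2 ^ Nat.log 2 n < n := by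
      have := Nat.lt_pow_succ_log_self one_lt_two n
      have := i.isLt
      rw [pow_succ] at *
      omega
    exact (Nat.lt_clog_iff_pow_lt one_lt_two).2 hlog
  · exact Nat.clog_le_of_le_pow (Nat.lt_pow_succ_log_self one_lt_two n).le

theorem Monotone.eq_twoLevelLengths {l : Fin n → ℕ} {u : ℕ} (hl : Monotone l)
    (hu : ∀ i, l i = u ∨ l i = u + 1) :
    l = twoLevelLengths n (univ.filter fun i => l i = u).card u := by
  funext i
  unfold twoLevelLengths
  rcases hu i with hi | hi
  · have hsub : Iic i ⊆ univ.filter fun j => l j = u := fun j hj => by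
      have := hl (mem_Iic.1 hj)
      have := hu j
      simp only [mem_filter, mem_univ, true_and]
      omega
    have := card_le_card hsub
    rw [Fin.card_Iic] at this
    rw [if_pos (by omega), hi]
  · have hsub : (univ.filter fun j => l j = u) ⊆ Iio i := fun j hj => by
      rw [mem_Iio]
      by_contra hij
      have := hl (not_lt.1 hij)
      simp only [mem_filter, mem_univ, true_and] at hj
      omega
    have := card_le_card hsub
    rw [Fin.card_Iio] at this
    rw [if_neg (by omega), hi]

theorem eq_balancedLengths {l : Fin n → ℕ} (hn : 0 < n) (hl : Monotone l)
    (hK : kraftSum l = 1) (hflat : l ⟨n - 1, by omega⟩ ≤ l ⟨0, hn⟩ + 1) :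
    l = balancedLengths n := by
  set u := l ⟨0, hn⟩
  set A := (univ.filter fun i => l i = u).card
  have hu : ∀ i, l i = u ∨ l i = u + 1 := fun i => by
    have := hl (show (⟨0, hn⟩ : Fin n) ≤ i from Fin.le_def.2 (Nat.zero_le _))
    have := hl (show i ≤ ⟨n - 1, by omega⟩ from Fin.le_def.2 (by simp; omega))
    omega
  have hA : l = twoLevelLengths n A u := hl.eq_twoLevelLengths hu
  have hAn : A ≤ n := (card_le_univ _).trans_eq (Fintype.card_fin n)
  have hA1 : 1 ≤ A := card_pos.2 ⟨⟨0, hn⟩, by simp [u]⟩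
  have hsum : A + n = 2 ^ (u + 1) := by
    rw [hA, kraftSum_twoLevelLengths u hAn, div_eq_one_iff_eq (by positivity)] at hK
    exact_mod_cast hK
  have hlog : Nat.log 2 n = u := Nat.log_eq_of_pow_le_of_lt_pow (by rw [pow_succ] at hsum; omega)
    (by omega)
  rw [hA, balancedLengths, hlog, ← hsum, Nat.add_sub_cancel]

theorem exists_ne_eq_of_kraftSum_eq_one {l : Fin n → ℕ} {j : Fin n} (hl : ∀ i, 1 ≤ l i)
    (hmax : ∀ i, l i ≤ l j) (hK : kraftSum l = 1) : ∃ k ≠ j, l k = l j := by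
  by_contra! hne
  have hnat : ∑ i, 2 ^ (l j - l i) = 2 ^ l j := by
    have := pow_mul_kraftSum hmax
    rw [hK, mul_one] at this
    exact_mod_cast this.symm
  -- all other terms of `∑ 2 ^ (l j - l i)` are even, so the sum would be odd
  have heven : Even (∑ i ∈ univ.erase j, 2 ^ (l j - l i)) := even_sum _ fun i hi =>
    (Nat.even_pow' (by have := hmax i; have := hne i (ne_of_mem_erase hi); omega)).2 even_two
  rw [← add_sum_erase _ _ (mem_univ j), Nat.sub_self, pow_zero] at hnat
  obtain ⟨a, ha⟩ := heven
  obtain ⟨b, hb⟩ := (Nat.even_pow' (m := 2) (n := l j) (by have := hl j; omega)).2 even_two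
  omega

theorem isCode_update_pred_of_kraftSum_lt_one {l : Fin n → ℕ} {j : Fin n} (hn : 1 < n)
    (hl : IsCode n l) (hmax : ∀ i, l i ≤ l j) (hK : kraftSum l < 1) :
    IsCode n (update l j (l j - 1)) := by
  have hN : ∑ i, 2 ^ (l j - l i) < 2 ^ l j := by
    have h := pow_mul_kraftSum hmax
    have : (2 : ℝ) ^ l j * kraftSum l < 2 ^ l j := mul_lt_of_lt_one_right (by positivity) hK
    exact_mod_cast h ▸ this
  have hL : 2 ≤ l j := by
    by_contra! hL
    have : ∀ i, l j - l i = 0 := fun i => by have := hl.1 i; omega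
    simp only [this, pow_zero, sum_const, card_univ, Fintype.card_fin, smul_eq_mul,
      mul_one] at hN
    interval_cases h : l j <;> omega
  refine ⟨fun i => ?_, ?_⟩
  · rcases eq_or_ne i j with rfl | hij
    · rw [update_self]; omega
    · rw [update_of_ne hij]; exact hl.1 i
  · obtain ⟨m, hm⟩ : ∃ m, l j = m + 1 := ⟨l j - 1, by omega⟩
    have hsum := sum_apply_update (fun _ (k : ℕ) => (2 : ℝ) ^ (-(k : ℝ))) l j m
    have hpow := pow_mul_kraftSum hmax
    rw [kraftSum] at hpow
    simp only [hm, Nat.add_sub_cancel, Real.two_rpow_neg_natCast] at hsum hpow hN ⊢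
    rw [hsum]
    have : ((∑ i, 2 ^ (m + 1 - l i) : ℕ) : ℝ) + 1 ≤ 2 ^ (m + 1) := by exact_mod_cast hN
    rw [← hpow] at this
    rw [pow_succ] at this ⊢
    field_simp at this ⊢
    linarith

theorem sign_mul_expCost_mono {d : ℝ} {w : Fin n → ℝ} (hw : ∀ i, 0 ≤ w i) {l l' : Fin n → ℕ}
    (h : l' ≤ l) : Real.sign d * expCost d w l' ≤ Real.sign d * expCost d w l := by
  simp only [expCost, mul_sum, mul_left_comm (Real.sign d)]
  refine sum_le_sum fun i _ => ?_
  exact mul_le_mul_of_nonneg_left (monotone_sign_mul_two_rpow d (Nat.cast_le.2 (h i))) (hw i)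

theorem sign_mul_expCost_comp_sort_le {d : ℝ} {w : Fin n → ℝ} (hw : Antitone w)
    (l : Fin n → ℕ) :
    Real.sign d * expCost d w (l ∘ Tuple.sort l) ≤ Real.sign d * expCost d w l := by
  set τ := Tuple.sort l
  have hg : Monotone fun i => Real.sign d * (2 : ℝ) ^ (d * (l (τ i) : ℝ)) :=
    (monotone_sign_mul_two_rpow d).comp (Nat.mono_cast.comp (Tuple.monotone_sort l))
  have key := (hw.antivary hg).sum_mul_le_sum_mul_comp_perm (σ := τ⁻¹)
  simp only [Equiv.Perm.inv_def, Equiv.apply_symm_apply] at key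
  simpa only [expCost, mul_sum, mul_left_comm (Real.sign d), comp_apply] using key

theorem isCode_comp_equiv {l : Fin n → ℕ} (hl : IsCode n l) (σ : Equiv.Perm (Fin n)) :
    IsCode n (l ∘ σ) :=
  ⟨fun i => hl.1 (σ i), (Equiv.sum_comp σ fun i => (2 : ℝ) ^ (-(l i : ℝ))).trans_le hl.2⟩

-- The two deepest sibling leaves `i₁, i₂` are merged into their parent, which `i₂` takes over,
-- and the shallowest leaf `i₀` is split to make room for `i₁`.
def exchangeLengths (l : Fin n → ℕ) (i₀ i₁ i₂ : Fin n) : Fin n → ℕ :=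
  update (update (update l i₂ (l i₂ - 1)) i₁ (l i₀ + 1)) i₀ (l i₀ + 1)

section Exchange

variable {l : Fin n → ℕ} {i₀ i₁ i₂ : Fin n}

theorem sum_apply_exchangeLengths {M : Type*} [AddCommGroup M] (F : Fin n → ℕ → M)
    (h₀₁ : i₀ ≠ i₁) (h₀₂ : i₀ ≠ i₂) (h₁₂ : i₁ ≠ i₂) :
    ∑ j, F j (exchangeLengths l i₀ i₁ i₂ j) = ∑ j, F j (l j) + (F i₀ (l i₀ + 1) - F i₀ (l i₀))
      + (F i₁ (l i₀ + 1) - F i₁ (l i₁)) + (F i₂ (l i₂ - 1) - F i₂ (l i₂)) := by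
  simp only [exchangeLengths, sum_apply_update, update_of_ne h₀₁, update_of_ne h₀₂,
    update_of_ne h₁₂]
  abel

theorem kraftSum_exchangeLengths (h₀₁ : i₀ ≠ i₁) (h₀₂ : i₀ ≠ i₂) (h₁₂ : i₁ ≠ i₂)
    (hl₁₂ : l i₁ = l i₂) (hl₂ : 1 ≤ l i₂) :
    kraftSum (exchangeLengths l i₀ i₁ i₂) = kraftSum l := by
  obtain ⟨m, hm⟩ : ∃ m, l i₂ = m + 1 := ⟨l i₂ - 1, by omega⟩
  rw [kraftSum, kraftSum,
    sum_apply_exchangeLengths (fun _ (k : ℕ) => (2 : ℝ) ^ (-(k : ℝ))) h₀₁ h₀₂ h₁₂, hl₁₂, hm,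
    Nat.add_sub_cancel]
  simp only [Real.two_rpow_neg_natCast, pow_succ]
  field_simp
  ring

theorem sum_exchangeLengths_lt (h₀₁ : i₀ ≠ i₁) (h₀₂ : i₀ ≠ i₂) (h₁₂ : i₁ ≠ i₂)
    (hl₁₂ : l i₁ = l i₂) (hgap : l i₀ + 2 ≤ l i₂) :
    ∑ j, exchangeLengths l i₀ i₁ i₂ j < ∑ j, l j := by
  have h := sum_apply_exchangeLengths (l := l) (fun _ (k : ℕ) => (k : ℤ)) h₀₁ h₀₂ h₁₂
  rw [← Nat.cast_sum, ← Nat.cast_sum] at h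
  omega

theorem sign_mul_expCost_exchangeLengths_le {d : ℝ} {w : Fin n → ℝ} (hd : -1 ≤ d)
    (h₀₁ : i₀ ≠ i₁) (h₀₂ : i₀ ≠ i₂) (h₁₂ : i₁ ≠ i₂) (hl₁₂ : l i₁ = l i₂)
    (hgap : l i₀ + 2 ≤ l i₂) (hw₂ : 0 ≤ w i₂) (hw₁₂ : w i₂ ≤ w i₁)
    (hw₀ : w i₀ ≤ 2 ^ d * (w i₁ + w i₂)) :
    Real.sign d * expCost d w (exchangeLengths l i₀ i₁ i₂) ≤ Real.sign d * expCost d w l := by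
  obtain ⟨m, hm⟩ : ∃ m, l i₂ = m + 1 := ⟨l i₂ - 1, by omega⟩
  have hc : 1 / 2 ≤ (2 : ℝ) ^ d := by
    simpa [Real.rpow_neg_one] using Real.rpow_le_rpow_of_exponent_le one_le_two hd
  have hpow (x : ℝ) : (2 : ℝ) ^ (d * (x + 1)) = 2 ^ d * 2 ^ (d * x) := by
    rw [mul_add_one, Real.rpow_add two_pos, mul_comm]
  have hφ := monotone_sign_mul_two_rpow d
  have ha := hφ (show (l i₀ : ℝ) ≤ l i₀ + 1 by linarith)
  have hab := hφ (show (l i₀ : ℝ) + 1 ≤ m by exact_mod_cast (by omega : l i₀ + 1 ≤ m))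
  simp only [hpow, mul_left_comm (Real.sign d)] at ha hab
  have key := exchange_ineq hc ha hab hw₂ hw₁₂ hw₀
  rw [expCost, expCost, sum_apply_exchangeLengths (fun j (k : ℕ) => w j * (2 : ℝ) ^ (d * k))
    h₀₁ h₀₂ h₁₂, hl₁₂, hm, Nat.add_sub_cancel]
  push_cast
  rw [hpow, hpow]
  linear_combination key

end Exchange

theorem exists_sum_lt_of_monotone_ne_balancedLengths {d : ℝ} {w : Fin n → ℝ} (hn : 1 < n)
    (hd : -1 ≤ d) (hw : ∀ i, 0 ≤ w i) (hanti : Antitone w)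
    (hcond : w ⟨0, by omega⟩ ≤ 2 ^ d * (w ⟨n - 2, by omega⟩ + w ⟨n - 1, by omega⟩))
    {l : Fin n → ℕ} (hl : IsCode n l) (hmono : Monotone l) (hne : l ≠ balancedLengths n) :
    ∃ l' : Fin n → ℕ, IsCode n l' ∧ ∑ i, l' i < ∑ i, l i ∧
      Real.sign d * expCost d w l' ≤ Real.sign d * expCost d w l := by
  set i₀ : Fin n := ⟨0, by omega⟩
  set i₁ : Fin n := ⟨n - 2, by omega⟩
  set i₂ : Fin n := ⟨n - 1, by omega⟩
  have hmax : ∀ i, l i ≤ l i₂ := fun i => hmono (Fin.le_def.2 (by simp [i₂]; omega))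
  rcases hl.2.lt_or_eq with hK | hK
  · have hle : update l i₂ (l i₂ - 1) ≤ l := update_le_iff.2 ⟨Nat.sub_le _ _, fun _ _ => le_rfl⟩
    refine ⟨_, isCode_update_pred_of_kraftSum_lt_one hn hl hmax hK,
      sum_lt_sum (fun i _ => hle i) ⟨i₂, mem_univ _, ?_⟩, sign_mul_expCost_mono hw hle⟩
    have := hl.1 i₂
    rw [update_self]
    omega
  · have hgap : l i₀ + 2 ≤ l i₂ := by
      by_contra!
      exact hne (eq_balancedLengths (by omega) hmono hK (Nat.lt_succ_iff.1 this))
    obtain ⟨k, hk, hlk⟩ := exists_ne_eq_of_kraftSum_eq_one hl.1 hmax hK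
    have hk₁ : k ≤ i₁ := by
      have : (k : ℕ) ≠ n - 1 := Fin.val_ne_of_ne hk
      exact Fin.le_def.2 (show (k : ℕ) ≤ n - 2 by omega)
    have hl₁₂ : l i₁ = l i₂ := le_antisymm (hmax i₁) (hlk ▸ hmono hk₁)
    have h₀₁ : i₀ ≠ i₁ := fun h => by rw [h] at hgap; omega
    have h₀₂ : i₀ ≠ i₂ := fun h => by rw [h] at hgap; omega
    have h₁₂ : i₁ ≠ i₂ := Fin.ne_of_val_ne (by simp [i₁, i₂]; omega)
    refine ⟨exchangeLengths l i₀ i₁ i₂, ⟨fun i => ?_, ?_⟩,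
      sum_exchangeLengths_lt h₀₁ h₀₂ h₁₂ hl₁₂ hgap,
      sign_mul_expCost_exchangeLengths_le hd h₀₁ h₀₂ h₁₂ hl₁₂ hgap (hw i₂)
        (hanti (Fin.le_def.2 (by simp [i₁, i₂]; omega))) hcond⟩
    · have := hl.1 i
      simp only [exchangeLengths, update_apply]
      split_ifs <;> omega
    · exact (kraftSum_exchangeLengths h₀₁ h₀₂ h₁₂ hl₁₂ (by omega)).trans_le hl.2

theorem sign_mul_expCost_balancedLengths_le {d : ℝ} {w : Fin n → ℝ} (hn : 1 < n)
    (hd : -1 ≤ d) (hw : ∀ i, 0 ≤ w i) (hanti : Antitone w)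
    (hcond : w ⟨0, by omega⟩ ≤ 2 ^ d * (w ⟨n - 2, by omega⟩ + w ⟨n - 1, by omega⟩))
    {l : Fin n → ℕ} (hl : IsCode n l) :
    Real.sign d * expCost d w (balancedLengths n) ≤ Real.sign d * expCost d w l := by
  induction hN : ∑ i, l i using Nat.strong_induction_on generalizing l with
  | _ N ih =>
  have hsort := sign_mul_expCost_comp_sort_le (d := d) hanti l
  by_cases hbal : l ∘ Tuple.sort l = balancedLengths n
  · exact hbal ▸ hsort
  obtain ⟨l', hl', hlt, hcost⟩ := exists_sum_lt_of_monotone_ne_balancedLengths hn hd hw hanti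
    hcond (isCode_comp_equiv hl _) (Tuple.monotone_sort l) hbal
  have hsum : ∑ i, (l ∘ Tuple.sort l) i = ∑ i, l i := Equiv.sum_comp _ l
  exact (ih _ (by omega) hl' rfl).trans (hcost.trans hsort)

end Codes

theorem rpow_le_of_le_combine {d x y z : ℝ} (hd : -1 < d) (hx : 0 ≤ x) (hy : 0 ≤ y) (hz : 0 ≤ z)
    (h : x ≤ combine d y z) : x ^ (1 + d) ≤ 2 ^ d * (y ^ (1 + d) + z ^ (1 + d)) := by
  have := Real.rpow_le_rpow hx h (by linarith : 0 ≤ 1 + d)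
  rwa [combine, ← Real.rpow_mul (by positivity), one_div_mul_cancel (by linarith), Real.rpow_one,
    ← mul_add] at this

theorem one_div_mul_logb_le_of_sign_mul_le {d x y : ℝ} (hx : 0 < x) (hy : 0 < y)
    (h : Real.sign d * x ≤ Real.sign d * y) : 1 / d * logb 2 x ≤ 1 / d * logb 2 y := by
  rcases lt_trichotomy d 0 with hd | rfl | hd
  · rw [Real.sign_of_neg hd] at h
    exact mul_le_mul_of_nonpos_left ((logb_le_logb one_lt_two hy hx).2 (by linarith))
      (one_div_nonpos.2 hd.le)
  · simp
  · rw [Real.sign_of_pos hd, one_mul, one_mul] at h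
    exact mul_le_mul_of_nonneg_left ((logb_le_logb one_lt_two hx hy).2 h) (by positivity)

theorem stmt_3 (n : ℕ) (hn : 2 ≤ n) (d : ℝ) (hd : -1 < d)
    (p : Fin n → ℝ) (hp : ∀ i, 0 < p i)
    (hsorted : ∀ i j : Fin n, i ≤ j → p j ≤ p i)
    (hcond : p ⟨0, by omega⟩ ≤ combine d (p ⟨n - 2, by omega⟩) (p ⟨n - 1, by omega⟩)) :
    ∃ l : Fin n → ℕ, IsCode n l ∧
      expRedundancy n d p l = expRedundancyOpt n d p ∧
      ∑ i, (2 : ℝ) ^ (-(l i : ℝ)) = 1 ∧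
      ∀ i, l i = Nat.log 2 n ∨ l i = Nat.clog 2 n := by
  set w : Fin n → ℝ := fun i => p i ^ (1 + d)
  have hw_pos (i : Fin n) : 0 < w i := Real.rpow_pos_of_pos (hp i) _
  have hw_anti : Antitone w := fun i j hij =>
    Real.rpow_le_rpow (hp j).le (hsorted i j hij) (by linarith)
  have hcost_pos (l : Fin n → ℕ) : 0 < expCost d w l :=
    sum_pos (fun i _ => mul_pos (hw_pos i) (Real.rpow_pos_of_pos two_pos _))
      ⟨⟨0, by omega⟩, mem_univ _⟩
  have hopt (l : Fin n → ℕ) (hl : IsCode n l) :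
      expRedundancy n d p (balancedLengths n) ≤ expRedundancy n d p l :=
    one_div_mul_logb_le_of_sign_mul_le (hcost_pos _) (hcost_pos _)
      (sign_mul_expCost_balancedLengths_le hn hd.le (fun i => (hw_pos i).le) hw_anti
        (rpow_le_of_le_combine hd (hp _).le (hp _).le (hp _).le hcond) hl)
  refine ⟨balancedLengths n, isCode_balancedLengths hn, ?_, kraftSum_balancedLengths (by omega),
    balancedLengths_eq_log_or_clog⟩
  have hleast : IsLeast {r | ∃ l, IsCode n l ∧ r = expRedundancy n d p l}
      (expRedundancy n d p (balancedLengths n)) :=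
    ⟨⟨_, isCode_balancedLengths hn, rfl⟩, by rintro _ ⟨l, hl, rfl⟩; exact hopt l hl⟩
  exact hleast.csInf_eq.symm
end

section
/- Let d > −1 with d ≠ 0, let p be a probability vector on n ≥ 2 symbols, let l be a codeword-length vector, and let j be any index. Then R^d(p,l) ≥ l_j + (1/d)·log₂( p_j^(1+d) + (1−p_j)^(1+d)·(2^(l_j) − 1)^(−d) ). -/
/-!
Split off the `j`-th term of the sum defining `R^d(p, l)`. The remaining symbols carry
probability `1 - p j` and, by Kraft, a budget `∑_{i ≠ j} 2^(-l i) ≤ 1 - 2^(-l j)`. The perspective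
`(p, x) ↦ x (p / x)^(1+d) = p^(1+d) x^(-d)` of `t ↦ t^(1+d)` is jointly convex for `d > 0` and
concave for `-1 < d < 0`, so Jensen bounds the remainder by its value at the pooled probability and
budget: from below when `d > 0`, from above when `d < 0`, which is exactly what multiplying
`logb 2` by `1 / d` requires.
-/

open Real Finset

section Perspective

variable {ι : Type*} {s : Finset ι} {p x : ι → ℝ}

theorem ConvexOn.mul_map_div_le_sum {f : ℝ → ℝ} (hf : ConvexOn ℝ (Set.Ici 0) f)
    (hs : s.Nonempty) (hp : ∀ i ∈ s, 0 ≤ p i) (hx : ∀ i ∈ s, 0 < x i) :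
    (∑ i ∈ s, x i) * f ((∑ i ∈ s, p i) / ∑ i ∈ s, x i) ≤ ∑ i ∈ s, x i * f (p i / x i) := by
  have hX : 0 < ∑ i ∈ s, x i := sum_pos hx hs
  have hjensen := hf.map_sum_le (w := fun i => x i / ∑ i ∈ s, x i) (p := fun i => p i / x i)
    (fun i hi => (div_pos (hx i hi) hX).le)
    (by rw [← sum_div, div_self hX.ne'])
    (fun i hi => Set.mem_Ici.2 (div_nonneg (hp i hi) (hx i hi).le))
  have hmean : ∑ i ∈ s, (x i / ∑ i ∈ s, x i) • (p i / x i) = (∑ i ∈ s, p i) / ∑ i ∈ s, x i := by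
    rw [sum_div]
    exact sum_congr rfl fun i hi => by
      rw [smul_eq_mul, div_mul_div_comm, mul_comm, mul_div_mul_right _ _ (hx i hi).ne']
  rw [hmean] at hjensen
  simp only [smul_eq_mul, div_mul_eq_mul_div, ← sum_div] at hjensen
  rwa [le_div_iff₀ hX, mul_comm] at hjensen

theorem ConcaveOn.sum_le_mul_map_div {f : ℝ → ℝ} (hf : ConcaveOn ℝ (Set.Ici 0) f)
    (hs : s.Nonempty) (hp : ∀ i ∈ s, 0 ≤ p i) (hx : ∀ i ∈ s, 0 < x i) :
    ∑ i ∈ s, x i * f (p i / x i) ≤ (∑ i ∈ s, x i) * f ((∑ i ∈ s, p i) / ∑ i ∈ s, x i) := by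
  simpa only [Pi.neg_apply, mul_neg, sum_neg_distrib, neg_le_neg_iff] using
    hf.neg.mul_map_div_le_sum hs hp hx

theorem mul_div_rpow_one_add {p x : ℝ} (hp : 0 ≤ p) (hx : 0 < x) (d : ℝ) :
    x * (p / x) ^ (1 + d) = p ^ (1 + d) * x ^ (-d) := by
  rw [div_rpow hp hx.le, rpow_add hx, rpow_one, rpow_neg hx.le]
  field_simp

theorem rpow_sum_mul_rpow_sum_le {d : ℝ} (hd : 0 ≤ d) (hs : s.Nonempty)
    (hp : ∀ i ∈ s, 0 ≤ p i) (hx : ∀ i ∈ s, 0 < x i) :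
    (∑ i ∈ s, p i) ^ (1 + d) * (∑ i ∈ s, x i) ^ (-d) ≤ ∑ i ∈ s, p i ^ (1 + d) * x i ^ (-d) := by
  have h := (convexOn_rpow (by linarith : 1 ≤ 1 + d)).mul_map_div_le_sum hs hp hx
  rwa [mul_div_rpow_one_add (sum_nonneg hp) (sum_pos hx hs),
    sum_congr rfl fun i hi => mul_div_rpow_one_add (hp i hi) (hx i hi) d] at h

theorem sum_le_rpow_sum_mul_rpow_sum {d : ℝ} (hd : -1 ≤ d) (hd' : d ≤ 0) (hs : s.Nonempty)
    (hp : ∀ i ∈ s, 0 ≤ p i) (hx : ∀ i ∈ s, 0 < x i) :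
    ∑ i ∈ s, p i ^ (1 + d) * x i ^ (-d) ≤ (∑ i ∈ s, p i) ^ (1 + d) * (∑ i ∈ s, x i) ^ (-d) := by
  have h :=
    (Real.concaveOn_rpow (by linarith : 0 ≤ 1 + d) (by linarith)).sum_le_mul_map_div hs hp hx
  rwa [mul_div_rpow_one_add (sum_nonneg hp) (sum_pos hx hs),
    sum_congr rfl fun i hi => mul_div_rpow_one_add (hp i hi) (hx i hi) d] at h

theorem zero_le_mul_sum_rpow_mul_rpow_sub {d K : ℝ} (hd : -1 < d) (hp : ∀ i ∈ s, 0 ≤ p i)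
    (hx : ∀ i ∈ s, 0 < x i) (hK : ∑ i ∈ s, x i ≤ K) :
    0 ≤ d * (∑ i ∈ s, p i ^ (1 + d) * x i ^ (-d) - (∑ i ∈ s, p i) ^ (1 + d) * K ^ (-d)) := by
  rcases s.eq_empty_or_nonempty with rfl | hs
  · simp [zero_rpow (by linarith : 1 + d ≠ 0)]
  have hX : 0 < ∑ i ∈ s, x i := sum_pos hx hs
  rcases lt_trichotomy d 0 with hneg | rfl | hpos
  · refine mul_nonneg_of_nonpos_of_nonpos hneg.le (sub_nonpos.2 ?_)
    calc ∑ i ∈ s, p i ^ (1 + d) * x i ^ (-d)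
        ≤ (∑ i ∈ s, p i) ^ (1 + d) * (∑ i ∈ s, x i) ^ (-d) :=
          sum_le_rpow_sum_mul_rpow_sum hd.le hneg.le hs hp hx
      _ ≤ (∑ i ∈ s, p i) ^ (1 + d) * K ^ (-d) := by
          gcongr
          · exact rpow_nonneg (sum_nonneg hp) _
          · linarith
  · simp
  · refine mul_nonneg hpos.le (sub_nonneg.2 ?_)
    calc (∑ i ∈ s, p i) ^ (1 + d) * K ^ (-d)
        ≤ (∑ i ∈ s, p i) ^ (1 + d) * (∑ i ∈ s, x i) ^ (-d) :=
          mul_le_mul_of_nonneg_left (rpow_le_rpow_of_nonpos hX hK (by linarith))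
            (rpow_nonneg (sum_nonneg hp) _)
      _ ≤ ∑ i ∈ s, p i ^ (1 + d) * x i ^ (-d) := rpow_sum_mul_rpow_sum_le hpos.le hs hp hx

end Perspective

theorem one_div_mul_logb_le_of_zero_le_mul_sub {b d x y : ℝ} (hb : 1 < b) (hx : 0 < x)
    (hy : 0 < y) (h : 0 ≤ d * (y - x)) : 1 / d * logb b x ≤ 1 / d * logb b y := by
  rcases lt_trichotomy d 0 with hneg | rfl | hpos
  · have hyx : y ≤ x := sub_nonpos.1 (nonpos_of_mul_nonneg_right h hneg)
    exact mul_le_mul_of_nonpos_left (logb_le_logb_of_le hb hy hyx) (one_div_neg.2 hneg).le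
  · simp
  · have hxy : x ≤ y := sub_nonneg.1 ((mul_nonneg_iff_of_pos_left hpos).1 h)
    exact mul_le_mul_of_nonneg_left (logb_le_logb_of_le hb hx hxy) (one_div_pos.2 hpos).le

theorem one_sub_rpow_neg_rpow {b L : ℝ} (hb : 0 < b) (hbL : 1 ≤ b ^ L) (d : ℝ) :
    (1 - b ^ (-L)) ^ (-d) = (b ^ L - 1) ^ (-d) * b ^ (d * L) := by
  have h : 1 - b ^ (-L) = (b ^ L - 1) * b ^ (-L) := by
    rw [sub_mul, ← rpow_add hb, add_neg_cancel, rpow_zero, one_mul]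
  rw [h, mul_rpow (by linarith) (rpow_nonneg hb.le _), ← rpow_mul hb.le, neg_mul_neg, mul_comm L]

theorem add_one_div_mul_logb {b d A : ℝ} (hb : 0 < b) (hb1 : b ≠ 1) (hd : d ≠ 0) (hA : 0 < A)
    (L : ℝ) : L + 1 / d * logb b A = 1 / d * logb b (b ^ (d * L) * A) := by
  rw [logb_mul (rpow_pos_of_pos hb _).ne' hA.ne', logb_rpow hb hb1]
  field_simp

/-- The subtracted term is `(1 - p j) ^ (1 + d) * (1 - 2 ^ (-l j)) ^ (-d)`: pooled probability and
Kraft budget of the symbols other than `j`. -/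
theorem IsCode.zero_le_mul_sum_erase_sub {n : ℕ} {l : Fin n → ℕ} (hl : IsCode n l)
    {p : Fin n → ℝ} (hp : ∀ i, 0 ≤ p i) (hpsum : ∑ i, p i = 1) {d : ℝ} (hd : -1 < d)
    (j : Fin n) :
    0 ≤ d * (∑ i ∈ univ.erase j, p i ^ (1 + d) * (2 : ℝ) ^ (d * (l i : ℝ)) -
      (1 - p j) ^ (1 + d) * (((2 : ℝ) ^ (l j : ℝ) - 1) ^ (-d) * 2 ^ (d * (l j : ℝ)))) := by
  have hrest : ∑ i ∈ univ.erase j, p i = 1 - p j := by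
    rw [sum_erase_eq_sub (mem_univ j), hpsum]
  have hbudget : ∑ i ∈ univ.erase j, (2 : ℝ) ^ (-(l i : ℝ)) ≤ 1 - 2 ^ (-(l j : ℝ)) := by
    rw [sum_erase_eq_sub (mem_univ j)]
    linarith [hl.2]
  have hlength : ∀ i, ((2 : ℝ) ^ (-(l i : ℝ))) ^ (-d) = 2 ^ (d * (l i : ℝ)) := fun i => by
    rw [← rpow_mul zero_le_two, neg_mul_neg, mul_comm]
  have h := zero_le_mul_sum_rpow_mul_rpow_sub hd (fun i _ => hp i)
    (fun i _ => rpow_pos_of_pos two_pos _) hbudget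
  rwa [sum_congr rfl fun i _ => congrArg _ (hlength i), hrest,
    one_sub_rpow_neg_rpow two_pos (one_le_rpow one_le_two (Nat.cast_nonneg _))] at h

theorem stmt_4_general (n : ℕ) (d : ℝ) (hd : -1 < d) (hd0 : d ≠ 0)
    (p : Fin n → ℝ) (hp : ∀ i, 0 < p i) (hpsum : ∑ i, p i = 1)
    (l : Fin n → ℕ) (hl : IsCode n l) (j : Fin n) :
    (l j : ℝ) + (1 / d) * Real.logb 2
        ((p j) ^ (1 + d) + (1 - p j) ^ (1 + d) * ((2 : ℝ) ^ (l j : ℝ) - 1) ^ (-d))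
      ≤ expRedundancy n d p l := by
  set L : ℝ := (l j : ℝ)
  have hkey := hl.zero_le_mul_sum_erase_sub (fun i => (hp i).le) hpsum hd j
  have hpj := rpow_pos_of_pos (hp j) (1 + d)
  have hrest := rpow_nonneg (hpsum ▸ sub_nonneg.2 (single_le_sum (fun i _ => (hp i).le)
    (mem_univ j)) : (0 : ℝ) ≤ 1 - p j) (1 + d)
  have hslack := rpow_nonneg (sub_nonneg.2 (one_le_rpow one_le_two (Nat.cast_nonneg (l j)))) (-d)
  calc L + 1 / d * logb 2 (p j ^ (1 + d) + (1 - p j) ^ (1 + d) * ((2 : ℝ) ^ L - 1) ^ (-d))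
      = 1 / d * logb 2 (p j ^ (1 + d) * 2 ^ (d * L) +
          (1 - p j) ^ (1 + d) * (((2 : ℝ) ^ L - 1) ^ (-d) * 2 ^ (d * L))) := by
        rw [add_one_div_mul_logb two_pos (by norm_num) hd0 (by positivity)]
        ring_nf
    _ ≤ 1 / d * logb 2 (p j ^ (1 + d) * 2 ^ (d * L) +
          ∑ i ∈ univ.erase j, p i ^ (1 + d) * 2 ^ (d * (l i : ℝ))) := by
        refine one_div_mul_logb_le_of_zero_le_mul_sub one_lt_two (by positivity) ?_
          (by rwa [add_sub_add_left_eq_sub])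
        exact add_pos_of_pos_of_nonneg (by positivity)
          (sum_nonneg fun i _ => by have := hp i; positivity)
    _ = expRedundancy n d p l := by
        rw [expRedundancy, add_comm, sum_erase_add _ _ (mem_univ j)]

theorem stmt_4 (n : ℕ) (hn : 2 ≤ n) (d : ℝ) (hd : -1 < d) (hd0 : d ≠ 0)
    (p : Fin n → ℝ) (hp : ∀ i, 0 < p i) (hpsum : ∑ i, p i = 1)
    (l : Fin n → ℕ) (hl : IsCode n l) (j : Fin n) :
    (l j : ℝ) + (1 / d) * Real.logb 2
        ((p j) ^ (1 + d) + (1 - p j) ^ (1 + d) * ((2 : ℝ) ^ (l j : ℝ) - 1) ^ (-d))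
      ≤ expRedundancy n d p l :=
  stmt_4_general n d hd hd0 p hp hpsum l hl j
end

section
/- Let d > −1 with d ≠ 0, let p be a probability vector on n ≥ 2 symbols, and let j be any index. Then for every positive integer λ there exists a codeword-length vector l with R^d(p,l) < λ + (1/d)·log₂( p_j^(1+d) + 2^d·(1−p_j)^(1+d)·(2^λ − 1)^(−d) ). Consequently, the optimal exponential redundancy satisfies R^d_opt(p) < λ + (1/d)·log₂( p_j^(1+d) + 2^d·(1−p_j)^(1+d)·(2^λ − 1)^(−d) ) for every positive integer λ. -/
/-!
Pin the length of symbol `j` to `λ` and give every other symbol the Shannon-type length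
`⌈log₂ (K / pᵢ)⌉`, where `K = (1 - p_j) / (1 - 2^(-λ))` is chosen so that these lengths fit
exactly into the Kraft budget `1 - 2^(-λ)` left over by the pinned symbol.
For either sign of `d`, the map `l ↦ (1/d) log₂ ∑ wᵢ 2^(d lᵢ)` is strictly increasing in each
coordinate, so replacing each ceiling by `log₂ (K / pᵢ) + 1` strictly increases `R^d`; for these
real lengths the sum is `2^(dλ) (p_j^(1+d) + 2^d (1 - p_j)^(1+d) (2^λ - 1)^(-d))` in closed form.
Since `R^d` is bounded below by its value at the all-ones lengths, the infimum inherits the bound.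
-/

open Real Finset

noncomputable def expMean {ι : Type*} [Fintype ι] (d : ℝ) (w x : ι → ℝ) : ℝ :=
  (1 / d) * logb 2 (∑ i, w i * (2 : ℝ) ^ (d * x i))

section ExpMean

variable {ι : Type*} [Fintype ι] {d : ℝ} {w x y : ι → ℝ}

theorem expMean_lt (hd : d ≠ 0) (hw : ∀ i, 0 < w i) (hxy : ∀ i, x i ≤ y i)
    (hlt : ∃ i, x i < y i) : expMean d w x < expMean d w y := by
  obtain ⟨k, hk⟩ := hlt
  have hsum_pos (z : ι → ℝ) : 0 < ∑ i, w i * (2 : ℝ) ^ (d * z i) :=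
    Finset.sum_pos (fun i _ => by have := hw i; positivity) ⟨k, mem_univ k⟩
  have hsum_lt {u v : ι → ℝ} (huv : ∀ i, u i ≤ v i) (hk : u k < v k) :
      ∑ i, w i * (2 : ℝ) ^ u i < ∑ i, w i * (2 : ℝ) ^ v i :=
    Finset.sum_lt_sum
      (fun i _ => mul_le_mul_of_nonneg_left (rpow_le_rpow_of_exponent_le one_le_two (huv i))
        (hw i).le)
      ⟨k, mem_univ k, mul_lt_mul_of_pos_left (rpow_lt_rpow_of_exponent_lt one_lt_two hk) (hw k)⟩
  rcases hd.lt_or_gt with hneg | hpos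
  · have hsum := hsum_lt (fun i => mul_le_mul_of_nonpos_left (hxy i) hneg.le)
      (mul_lt_mul_of_neg_left hk hneg)
    exact mul_lt_mul_of_neg_left (logb_lt_logb one_lt_two (hsum_pos y) hsum)
      (one_div_neg.mpr hneg)
  · have hsum := hsum_lt (fun i => mul_le_mul_of_nonneg_left (hxy i) hpos.le)
      (mul_lt_mul_of_pos_left hk hpos)
    exact mul_lt_mul_of_pos_left (logb_lt_logb one_lt_two (hsum_pos x) hsum)
      (one_div_pos.mpr hpos)

theorem expMean_le (hd : d ≠ 0) (hw : ∀ i, 0 < w i) (hxy : ∀ i, x i ≤ y i) :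
    expMean d w x ≤ expMean d w y := by
  by_cases hlt : ∃ i, x i < y i
  · exact (expMean_lt hd hw hxy hlt).le
  · push Not at hlt
    rw [show x = y from funext fun i => (hxy i).antisymm (hlt i)]

end ExpMean

theorem expRedundancy_eq_expMean (n : ℕ) (d : ℝ) (p : Fin n → ℝ) (l : Fin n → ℕ) :
    expRedundancy n d p l = expMean d (fun i => p i ^ (1 + d)) (fun i => (l i : ℝ)) :=
  rfl

theorem bddBelow_expRedundancy (n : ℕ) {d : ℝ} (hd : d ≠ 0) {p : Fin n → ℝ}
    (hp : ∀ i, 0 < p i) :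
    BddBelow { r | ∃ l : Fin n → ℕ, IsCode n l ∧ r = expRedundancy n d p l } := by
  refine ⟨expMean d (fun i => p i ^ (1 + d)) fun _ => 1, ?_⟩
  rintro r ⟨l, ⟨hl, -⟩, rfl⟩
  rw [expRedundancy_eq_expMean]
  exact expMean_le hd (fun i => by have := hp i; positivity) fun i => by exact_mod_cast hl i

theorem two_rpow_neg_natCeil_logb_le {a : ℝ} (ha : 0 < a) :
    (2 : ℝ) ^ (-(⌈logb 2 a⌉₊ : ℝ)) ≤ a⁻¹ := by
  calc (2 : ℝ) ^ (-(⌈logb 2 a⌉₊ : ℝ)) ≤ 2 ^ (-logb 2 a) :=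
        rpow_le_rpow_of_exponent_le one_le_two (neg_le_neg (Nat.le_ceil _))
    _ = a⁻¹ := by rw [rpow_neg zero_le_two, rpow_logb two_pos (by norm_num) ha]

theorem rpow_one_add_mul_two_rpow_logb_add_one {a c : ℝ} (ha : 0 < a) (hc : 0 < c) (d : ℝ) :
    a ^ (1 + d) * (2 : ℝ) ^ (d * (logb 2 (c / a) + 1)) = a * (2 * c) ^ d := by
  have h2 : (2 : ℝ) ^ (d * (logb 2 (c / a) + 1)) = (2 * c) ^ d / a ^ d := by
    rw [mul_comm, ← logb_self_eq_one one_lt_two, ← logb_mul (by positivity) two_ne_zero,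
      rpow_mul zero_le_two, rpow_logb two_pos (by norm_num) (by positivity),
      div_mul_eq_mul_div, mul_comm c, div_rpow (by positivity) ha.le]
  rw [h2, rpow_add ha, rpow_one]
  field_simp

theorem mul_two_mul_div_one_sub_two_rpow_neg_rpow {q lam : ℝ} (hq : 0 < q) (hlam : 0 < lam)
    (d : ℝ) : q * (2 * (q / (1 - 2 ^ (-lam)))) ^ d
      = 2 ^ (d * lam) * (2 ^ d * q ^ (1 + d) * ((2 : ℝ) ^ lam - 1) ^ (-d)) := by
  have hpos : (0 : ℝ) < 2 ^ lam - 1 := by linarith [one_lt_rpow one_lt_two hlam]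
  have hA : 1 - (2 : ℝ) ^ (-lam) = (2 ^ lam - 1) / 2 ^ lam := by
    rw [rpow_neg zero_le_two]; field_simp
  rw [hA, div_div_eq_mul_div, mul_rpow zero_le_two (by positivity),
    div_rpow (by positivity) hpos.le, mul_rpow hq.le (by positivity), rpow_neg hpos.le,
    rpow_add hq, rpow_one, mul_comm d lam, rpow_mul zero_le_two]
  field_simp

section PinnedCode

variable {n : ℕ} {p : Fin n → ℝ} {j : Fin n} {lam : ℕ}

noncomputable def pinnedScale (p : Fin n → ℝ) (j : Fin n) (lam : ℕ) : ℝ :=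
  (1 - p j) / (1 - 2 ^ (-(lam : ℝ)))

noncomputable def pinnedLengths (p : Fin n → ℝ) (j : Fin n) (lam : ℕ) : Fin n → ℕ :=
  fun i => if i = j then lam else ⌈logb 2 (pinnedScale p j lam / p i)⌉₊

@[simp]
theorem pinnedLengths_self : pinnedLengths p j lam j = lam := if_pos rfl

theorem one_sub_two_rpow_neg_mem_Ioo (hlam : 1 ≤ lam) :
    1 - (2 : ℝ) ^ (-(lam : ℝ)) ∈ Set.Ioo 0 1 := by
  have hlam' : (0 : ℝ) < lam := by exact_mod_cast hlam
  constructor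
  · linarith [rpow_lt_one_of_one_lt_of_neg one_lt_two (neg_lt_zero.mpr hlam')]
  · linarith [rpow_pos_of_pos two_pos (-(lam : ℝ))]

theorem sum_erase_eq_one_sub (hpsum : ∑ i, p i = 1) : ∑ i ∈ univ.erase j, p i = 1 - p j := by
  rw [Finset.sum_erase_eq_sub (mem_univ j), hpsum]

theorem le_one_sub_of_ne (hp : ∀ i, 0 < p i) (hpsum : ∑ i, p i = 1) {i : Fin n}
    (hij : i ≠ j) : p i ≤ 1 - p j := by
  rw [← sum_erase_eq_one_sub hpsum]
  exact single_le_sum (fun i _ => (hp i).le) (mem_erase.mpr ⟨hij, mem_univ i⟩)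

theorem lt_pinnedScale (hp : ∀ i, 0 < p i) (hpsum : ∑ i, p i = 1) (hlam : 1 ≤ lam)
    {i : Fin n} (hij : i ≠ j) : p i < pinnedScale p j lam := by
  obtain ⟨hA, hA1⟩ := one_sub_two_rpow_neg_mem_Ioo hlam
  have hpi := le_one_sub_of_ne hp hpsum hij
  refine hpi.trans_lt ((lt_div_iff₀ hA).mpr (mul_lt_of_lt_one_right ?_ hA1))
  linarith [hp i]

theorem isCode_pinnedLengths (hp : ∀ i, 0 < p i) (hpsum : ∑ i, p i = 1) (hlam : 1 ≤ lam) :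
    IsCode n (pinnedLengths p j lam) := by
  obtain ⟨hA, -⟩ := one_sub_two_rpow_neg_mem_Ioo hlam
  have hscale_div (i : Fin n) (hij : i ≠ j) : 1 < pinnedScale p j lam / p i :=
    (one_lt_div (hp i)).mpr (lt_pinnedScale hp hpsum hlam hij)
  have hpj : 0 ≤ 1 - p j := by
    linarith [single_le_sum (fun i _ => (hp i).le) (mem_univ j) (f := p)]
  have hscale : 0 ≤ pinnedScale p j lam := div_nonneg hpj hA.le
  refine ⟨fun i => ?_, ?_⟩
  · by_cases hij : i = j
    · simpa [pinnedLengths, hij] using hlam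
    · simpa [pinnedLengths, hij] using logb_pos one_lt_two (hscale_div i hij)
  have hrest : ∑ i ∈ univ.erase j, (2 : ℝ) ^ (-(pinnedLengths p j lam i : ℝ)) ≤
      1 - 2 ^ (-(lam : ℝ)) :=
    calc ∑ i ∈ univ.erase j, (2 : ℝ) ^ (-(pinnedLengths p j lam i : ℝ))
        ≤ ∑ i ∈ univ.erase j, p i / pinnedScale p j lam := by
          refine sum_le_sum fun i hi => ?_
          have hij := (mem_erase.mp hi).1
          simpa [pinnedLengths, hij] using
            two_rpow_neg_natCeil_logb_le (zero_lt_one.trans (hscale_div i hij))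
      _ = (1 - p j) / pinnedScale p j lam := by rw [← sum_div, sum_erase_eq_one_sub hpsum]
      _ ≤ 1 - 2 ^ (-(lam : ℝ)) :=
          div_le_of_le_mul₀ hscale hA.le (by rw [pinnedScale, mul_div_cancel₀ _ hA.ne'])
  rw [← add_sum_erase _ _ (mem_univ j), pinnedLengths_self]
  linarith

noncomputable def pinnedRealLengths (p : Fin n → ℝ) (j : Fin n) (lam : ℕ) : Fin n → ℝ :=
  fun i => if i = j then (lam : ℝ) else logb 2 (pinnedScale p j lam / p i) + 1

theorem natCast_pinnedLengths_lt (hp : ∀ i, 0 < p i) (hpsum : ∑ i, p i = 1) (hlam : 1 ≤ lam)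
    {i : Fin n} (hij : i ≠ j) :
    (pinnedLengths p j lam i : ℝ) < pinnedRealLengths p j lam i := by
  have hK : 1 < pinnedScale p j lam / p i :=
    (one_lt_div (hp i)).mpr (lt_pinnedScale hp hpsum hlam hij)
  simpa [pinnedLengths, pinnedRealLengths, hij] using
    Nat.ceil_lt_add_one (logb_pos one_lt_two hK).le

theorem natCast_pinnedLengths_le (hp : ∀ i, 0 < p i) (hpsum : ∑ i, p i = 1) (hlam : 1 ≤ lam)
    (i : Fin n) : (pinnedLengths p j lam i : ℝ) ≤ pinnedRealLengths p j lam i := by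
  by_cases hij : i = j
  · simp [pinnedLengths, pinnedRealLengths, hij]
  · exact (natCast_pinnedLengths_lt hp hpsum hlam hij).le

theorem sum_rpow_mul_two_rpow_pinnedRealLengths (hp : ∀ i, 0 < p i) (hpsum : ∑ i, p i = 1)
    (hlam : 1 ≤ lam) (hpj : 0 < 1 - p j) (d : ℝ) :
    ∑ i, p i ^ (1 + d) * (2 : ℝ) ^ (d * pinnedRealLengths p j lam i) = 2 ^ (d * lam) *
      (p j ^ (1 + d) + 2 ^ d * (1 - p j) ^ (1 + d) * (2 ^ (lam : ℝ) - 1) ^ (-d)) := by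
  obtain ⟨hA, -⟩ := one_sub_two_rpow_neg_mem_Ioo hlam
  have hK : 0 < pinnedScale p j lam := div_pos hpj hA
  calc ∑ i, p i ^ (1 + d) * (2 : ℝ) ^ (d * pinnedRealLengths p j lam i)
      = p j ^ (1 + d) * 2 ^ (d * lam) +
          ∑ i ∈ univ.erase j, p i * (2 * pinnedScale p j lam) ^ d := by
        rw [← add_sum_erase _ _ (mem_univ j)]
        congr 1
        · simp [pinnedRealLengths]
        · refine sum_congr rfl fun i hi => ?_
          simp only [pinnedRealLengths, if_neg (mem_erase.mp hi).1]
          exact rpow_one_add_mul_two_rpow_logb_add_one (hp i) hK d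
    _ = p j ^ (1 + d) * 2 ^ (d * lam) + (1 - p j) * (2 * pinnedScale p j lam) ^ d := by
        rw [← sum_mul, sum_erase_eq_one_sub hpsum]
    _ = _ := by
        rw [pinnedScale, mul_two_mul_div_one_sub_two_rpow_neg_rpow hpj (by exact_mod_cast hlam)]
        ring

theorem expRedundancy_pinnedLengths_lt (hn : 2 ≤ n) {d : ℝ} (hd0 : d ≠ 0)
    (hp : ∀ i, 0 < p i) (hpsum : ∑ i, p i = 1) (hlam : 1 ≤ lam) :
    expRedundancy n d p (pinnedLengths p j lam) < (lam : ℝ) + (1 / d) * logb 2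
      (p j ^ (1 + d) + (2 : ℝ) ^ d * (1 - p j) ^ (1 + d) * ((2 : ℝ) ^ (lam : ℝ) - 1) ^ (-d)) := by
  obtain ⟨k, hk⟩ := Fintype.exists_ne_of_one_lt_card (by simp; omega) j
  have hpj : 0 < 1 - p j := (hp k).trans_le (le_one_sub_of_ne hp hpsum hk)
  have hB :
      0 < p j ^ (1 + d) + (2 : ℝ) ^ d * (1 - p j) ^ (1 + d) * (2 ^ (lam : ℝ) - 1) ^ (-d) := by
    have h2lam : (0 : ℝ) < 2 ^ (lam : ℝ) - 1 := by
      linarith [one_lt_rpow one_lt_two (show (0 : ℝ) < lam by exact_mod_cast hlam)]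
    have := hp j
    positivity
  calc expRedundancy n d p (pinnedLengths p j lam)
      = expMean d (fun i => p i ^ (1 + d)) fun i => (pinnedLengths p j lam i : ℝ) :=
        expRedundancy_eq_expMean n d p _
    _ < expMean d (fun i => p i ^ (1 + d)) (pinnedRealLengths p j lam) :=
        expMean_lt hd0 (fun i => by have := hp i; positivity)
          (natCast_pinnedLengths_le hp hpsum hlam)
          ⟨k, natCast_pinnedLengths_lt hp hpsum hlam hk⟩
    _ = _ := by
        rw [expMean, sum_rpow_mul_two_rpow_pinnedRealLengths hp hpsum hlam hpj,
          logb_mul (by positivity) hB.ne', logb_rpow two_pos (by norm_num)]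
        field_simp

end PinnedCode

theorem stmt_6_general (n : ℕ) (hn : 2 ≤ n) (d : ℝ) (hd0 : d ≠ 0)
    (p : Fin n → ℝ) (hp : ∀ i, 0 < p i) (hpsum : ∑ i, p i = 1) (j : Fin n) :
    ∀ lam : ℕ, 1 ≤ lam →
      (∃ l : Fin n → ℕ, IsCode n l ∧
        expRedundancy n d p l < (lam : ℝ) + (1 / d) * Real.logb 2
          ((p j) ^ (1 + d) +
            (2 : ℝ) ^ d * (1 - p j) ^ (1 + d) * ((2 : ℝ) ^ (lam : ℝ) - 1) ^ (-d))) ∧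
      expRedundancyOpt n d p < (lam : ℝ) + (1 / d) * Real.logb 2
        ((p j) ^ (1 + d) +
          (2 : ℝ) ^ d * (1 - p j) ^ (1 + d) * ((2 : ℝ) ^ (lam : ℝ) - 1) ^ (-d)) := by
  intro lam hlam
  have hcode := isCode_pinnedLengths (j := j) hp hpsum hlam
  have hlt := expRedundancy_pinnedLengths_lt (j := j) hn hd0 hp hpsum hlam
  refine ⟨⟨_, hcode, hlt⟩, ?_⟩
  exact (csInf_le (bddBelow_expRedundancy n hd0 hp) ⟨_, hcode, rfl⟩).trans_lt hlt

theorem stmt_6 (n : ℕ) (hn : 2 ≤ n) (d : ℝ) (hd : -1 < d) (hd0 : d ≠ 0)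
    (p : Fin n → ℝ) (hp : ∀ i, 0 < p i) (hpsum : ∑ i, p i = 1) (j : Fin n) :
    ∀ lam : ℕ, 1 ≤ lam →
      (∃ l : Fin n → ℕ, IsCode n l ∧
        expRedundancy n d p l < (lam : ℝ) + (1 / d) * Real.logb 2
          ((p j) ^ (1 + d) +
            (2 : ℝ) ^ d * (1 - p j) ^ (1 + d) * ((2 : ℝ) ^ (lam : ℝ) - 1) ^ (-d))) ∧
      expRedundancyOpt n d p < (lam : ℝ) + (1 / d) * Real.logb 2
        ((p j) ^ (1 + d) +
          (2 : ℝ) ^ d * (1 - p j) ^ (1 + d) * ((2 : ℝ) ^ (lam : ℝ) - 1) ^ (-d)) :=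
  stmt_6_general n hn d hd0 p hp hpsum j
end

section
/- Let p be a probability vector on n ≥ 2 symbols, let j be an index, and let λ be a positive integer. Define lengths l by l_j = λ and l_i = ⌈ −log₂( p_i·(1 − 2^(−λ))/(1 − p_j) ) ⌉ for i ≠ j. Then l satisfies the Kraft inequality: ∑_i 2^(−l_i) ≤ 1. -/
/-! For `i ≠ j` the ceiling gives `2 ^ (-lᵢ) ≤ pᵢ (1 - 2 ^ (-λ)) / (1 - p_j)`, and these bounds
sum to `1 - 2 ^ (-λ)` because `∑_{i ≠ j} pᵢ = 1 - p_j`; the symbol `j` contributes the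
remaining `2 ^ (-λ)`. -/

open Real Finset

lemma Real.rpow_neg_natCeil_neg_logb_le {b x : ℝ} (hb : 1 < b) (hx : 0 < x) :
    b ^ (-(⌈-logb b x⌉₊ : ℝ)) ≤ x :=
  calc b ^ (-(⌈-logb b x⌉₊ : ℝ)) ≤ b ^ logb b x :=
        rpow_le_rpow_of_exponent_le hb.le (by linarith [Nat.le_ceil (-logb b x)])
    _ = x := rpow_logb (by linarith) hb.ne' hx

section ProbabilityVector

variable {ι : Type*} [Fintype ι] {p : ι → ℝ}

lemma lt_one_of_sum_eq_one_of_ne (hp : ∀ i, 0 < p i) (hpsum : ∑ i, p i = 1) {i j : ι}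
    (hij : i ≠ j) : p j < 1 := by
  have := add_le_sum (fun k _ ↦ (hp k).le) (mem_univ i) (mem_univ j) hij
  linarith [hp i]

lemma sum_erase_mul_div_one_sub_le [DecidableEq ι] (hpsum : ∑ i, p i = 1) (j : ι) {c : ℝ}
    (hc : 0 ≤ c) : ∑ i ∈ univ.erase j, p i * c / (1 - p j) ≤ c :=
  calc ∑ i ∈ univ.erase j, p i * c / (1 - p j)
      = c * ((∑ i ∈ univ.erase j, p i) / (1 - p j)) := by
        rw [← sum_div, ← sum_mul, mul_comm, mul_div_assoc]
    _ = c * ((1 - p j) / (1 - p j)) := by rw [sum_erase_eq_sub (mem_univ j), hpsum]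
    _ ≤ c := mul_le_of_le_one_right hc (div_self_le_one _)

end ProbabilityVector

theorem stmt_7_general (n : ℕ)
    (p : Fin n → ℝ) (hp : ∀ i, 0 < p i) (hpsum : ∑ i, p i = 1)
    (j : Fin n) (lam : ℕ) (hlam : 1 ≤ lam)
    (l : Fin n → ℕ)
    (hl : ∀ i, l i = if i = j then lam
      else ⌈-Real.logb 2 (p i * (1 - (2 : ℝ) ^ (-(lam : ℝ))) / (1 - p j))⌉₊) :
    ∑ i, (2 : ℝ) ^ (-(l i : ℝ)) ≤ 1 := by
  set c := 1 - (2 : ℝ) ^ (-(lam : ℝ))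
  have hc : 0 < c := sub_pos.mpr <| rpow_lt_one_of_one_lt_of_neg one_lt_two <|
    neg_neg_of_pos (Nat.cast_pos.mpr hlam)
  have hbound : ∀ i ∈ univ.erase j, (2 : ℝ) ^ (-(l i : ℝ)) ≤ p i * c / (1 - p j) := by
    intro i hi
    have hij := ne_of_mem_erase hi
    have hpj := lt_one_of_sum_eq_one_of_ne hp hpsum hij
    rw [hl i, if_neg hij]
    exact rpow_neg_natCeil_neg_logb_le one_lt_two (by have := hp i; positivity)
  calc ∑ i, (2 : ℝ) ^ (-(l i : ℝ))
      = (2 : ℝ) ^ (-(l j : ℝ)) + ∑ i ∈ univ.erase j, (2 : ℝ) ^ (-(l i : ℝ)) :=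
        (add_sum_erase _ _ (mem_univ j)).symm
    _ ≤ (2 : ℝ) ^ (-(lam : ℝ)) + c := by
        rw [hl j, if_pos rfl]
        gcongr
        exact (sum_le_sum hbound).trans (sum_erase_mul_div_one_sub_le hpsum j hc.le)
    _ = 1 := by ring

theorem stmt_7 (n : ℕ) (hn : 2 ≤ n)
    (p : Fin n → ℝ) (hp : ∀ i, 0 < p i) (hpsum : ∑ i, p i = 1)
    (j : Fin n) (lam : ℕ) (hlam : 1 ≤ lam)
    (l : Fin n → ℕ)
    (hl : ∀ i, l i = if i = j then lam
      else ⌈-Real.logb 2 (p i * (1 - (2 : ℝ) ^ (-(lam : ℝ))) / (1 - p j))⌉₊) :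
    ∑ i, (2 : ℝ) ^ (-(l i : ℝ)) ≤ 1 :=
  stmt_7_general n p hp hpsum j lam hlam l hl
end

section
/- Let d > −1 with d ≠ 0, let μ be a positive integer, and let p_1 ∈ [1/(2^(μ+1) − 1), 2^(−μ)). Let p be the probability vector on n = 2^(μ+1) − 1 symbols with first entry p_1 and all remaining 2^(μ+1) − 2 entries equal to (1 − p_1)/(2^(μ+1) − 2). Let l be the codeword-length vector with l_1 = μ and l_i = μ + 1 for all i ≠ 1. Then ∑_i 2^(−l_i) = 1, R^d(p,l) = μ + (1/d)·log₂( p_1^(1+d) + (1−p_1)^(1+d)·(2^μ − 1)^(−d) ), and l attains the optimal exponential redundancy: R^d(p,l) = R^d_opt(p). -/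
open Real Finset
set_option maxHeartbeats 1000000

/-- Discrete unimodality of `k ↦ ε w 2^{kd} + λ 2^{-k}`: under the two local ("Lagrange")
conditions on `λ`, the minimum over `ℕ` is attained at `m`. -/
lemma key_unimodal (d ε lam w : ℝ) (hw : 0 < w)
    (hε : ε * ((2:ℝ)^d - 1) = |(2:ℝ)^d - 1|)
    (hd1 : 0 < d + 1)
    (m : ℕ)
    (hlo : 2*w*|(2:ℝ)^d - 1| * (2:ℝ)^(((m:ℝ)-1)*(d+1)) ≤ lam)
    (hhi : lam ≤ 2*w*|(2:ℝ)^d - 1| * (2:ℝ)^((m:ℝ)*(d+1)))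
    (k : ℕ) :
    ε*w*(2:ℝ)^((m:ℝ)*d) + lam*(2:ℝ)^(-(m:ℝ)) ≤ ε*w*(2:ℝ)^((k:ℝ)*d) + lam*(2:ℝ)^(-(k:ℝ)) := by
  have two_pos : (0:ℝ) < 2 := by norm_num
  set F : ℕ → ℝ := fun k => ε*w*(2:ℝ)^((k:ℝ)*d) + lam*(2:ℝ)^(-(k:ℝ)) with hF
  set A : ℝ → ℝ := fun x => 2*w*|(2:ℝ)^d - 1| * (2:ℝ)^(x*(d+1)) with hA
  have hstep : ∀ j : ℕ, F (j+1) = F j + (2:ℝ)^(-((j:ℝ)+1)) * (A (j:ℝ) - lam) := by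
    intro j
    have e1 : ((j:ℝ)+1)*d = (j:ℝ)*d + d := by ring
    have e2 : (-((j:ℝ)+1)) = (-(j:ℝ)) + (-1) := by ring
    have e3 : (j:ℝ)*(d+1) = (j:ℝ)*d + (j:ℝ) := by ring
    simp only [hF, hA]
    push_cast
    rw [e1, e2, e3, Real.rpow_add two_pos, Real.rpow_add two_pos, Real.rpow_add two_pos]
    have h4 : (2:ℝ)^(-(j:ℝ)) * (2:ℝ)^((j:ℝ)) = 1 := by
      rw [← Real.rpow_add two_pos]; simp
    have h5 : (2:ℝ)^(-(1:ℝ)) = 1/2 := by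
      rw [Real.rpow_neg (le_of_lt two_pos), Real.rpow_one]; norm_num
    rw [h5]
    linear_combination (w * (2:ℝ)^((j:ℝ)*d)) * hε -
      (w * (2:ℝ)^((j:ℝ)*d) * |(2:ℝ)^d - 1|) * h4
  have hAmono : ∀ x y : ℝ, x ≤ y → A x ≤ A y := by
    intro x y hxy
    have h1 : (2:ℝ)^(x*(d+1)) ≤ (2:ℝ)^(y*(d+1)) :=
      Real.rpow_le_rpow_of_exponent_le one_le_two (by nlinarith)
    have hc : 0 ≤ 2*w*|(2:ℝ)^d - 1| := by positivity
    simp only [hA]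
    exact mul_le_mul_of_nonneg_left h1 hc
  have hup : ∀ k, m ≤ k → F m ≤ F k := by
    intro k hk
    induction k, hk using Nat.le_induction with
    | base => exact le_refl _
    | succ n hn ih =>
      have hAn : lam ≤ A (n:ℝ) := le_trans hhi (hAmono _ _ (by exact_mod_cast hn))
      have h2p : (0:ℝ) < (2:ℝ) ^ (-((n:ℝ) + 1)) := Real.rpow_pos_of_pos two_pos _
      nlinarith [hstep n, ih, h2p, hAn]
  have hdown : ∀ j, F m ≤ F (m - j) := by
    intro j
    induction j with
    | zero => simp
    | succ j ih =>
      by_cases hj : m ≤ j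
      · have hmm : m - (j+1) = m - j := by omega
        rw [hmm]; exact ih
      · push_neg at hj
        have hmj : m - (j+1) + 1 = m - j := by omega
        have hAle : A ((m - (j+1) : ℕ) : ℝ) ≤ lam := by
          refine le_trans (hAmono _ _ ?_) hlo
          have h2 : ((m - (j+1) : ℕ) : ℝ) ≤ ((m-1 : ℕ) : ℝ) := by
            exact_mod_cast (by omega : (m - (j+1) : ℕ) ≤ m - 1)
          have h3 : ((m-1 : ℕ) : ℝ) ≤ (m:ℝ) - 1 := by
            rw [Nat.cast_sub (by omega)]; simp
          nlinarith
        have hs := hstep (m - (j+1))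
        rw [hmj] at hs
        have h2p' : (0:ℝ) < (2:ℝ) ^ (-((((m - (j+1) : ℕ)):ℝ) + 1)) :=
          Real.rpow_pos_of_pos two_pos _
        nlinarith [hs, ih, h2p', hAle]
  show F m ≤ F k
  by_cases h : m ≤ k
  · exact hup k h
  · have hk : k = m - (m - k) := by omega
    rw [hk]; exact hdown (m - k)

/-- Main auxiliary lemma: all three conclusions, with the structure of `p` and `l`
given through a distinguished index `i0`. -/
lemma main_aux (d : ℝ) (hd : -1 < d) (hd0 : d ≠ 0) (μ n : ℕ) (hμ : 1 ≤ μ)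
    (hn : n = 2^(μ+1) - 1)
    (p₁ : ℝ) (hp₁ : 1 / ((2 : ℝ) ^ (μ + 1) - 1) ≤ p₁) (hp₁' : p₁ < 1 / (2 : ℝ) ^ μ)
    (p : Fin n → ℝ) (l : Fin n → ℕ) (i0 : Fin n)
    (hp0 : p i0 = p₁) (hpi : ∀ i, i ≠ i0 → p i = (1 - p₁) / ((2:ℝ)^(μ+1) - 2))
    (hl0 : l i0 = μ) (hli : ∀ i, i ≠ i0 → l i = μ + 1) :
    ∑ i, (2 : ℝ) ^ (-(l i : ℝ)) = 1 ∧
    expRedundancy n d p l = (μ : ℝ) + (1 / d) * Real.logb 2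
      (p₁ ^ (1 + d) + (1 - p₁) ^ (1 + d) * ((2 : ℝ) ^ (μ : ℝ) - 1) ^ (-d)) ∧
    expRedundancy n d p l = expRedundancyOpt n d p := by
  have two_pos : (0:ℝ) < 2 := by norm_num
  have hn1 : 1 < 2 ^ (μ + 1) := Nat.one_lt_two_pow_iff.mpr (by omega)
  have hQ2 : (2:ℝ) ≤ (2:ℝ)^μ := by
    calc (2:ℝ) = 2^1 := by norm_num
    _ ≤ 2^μ := pow_le_pow_right₀ (by norm_num) hμ
  have hP : (2:ℝ)^(μ+1) = 2 * (2:ℝ)^μ := by ring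
  have hQpos : (0:ℝ) < (2:ℝ)^μ := by positivity
  have hQr : (2:ℝ)^((μ:ℝ)) = (2:ℝ)^μ := Real.rpow_natCast 2 μ
  have hP1pos : (0:ℝ) < (2:ℝ)^(μ+1) - 1 := by rw [hP]; nlinarith
  have hp₁pos : 0 < p₁ := lt_of_lt_of_le (div_pos one_pos hP1pos) hp₁
  have hp₁1 : p₁ < 1 := by
    have h0 : 1 / (2:ℝ)^μ ≤ 1/2 :=
      div_le_div_of_nonneg_left (by norm_num) two_pos hQ2
    linarith
  have hCpos : (0:ℝ) < (2:ℝ)^(μ+1) - 2 := by rw [hP]; nlinarith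
  set q : ℝ := (1 - p₁) / ((2:ℝ)^(μ+1) - 2) with hq
  have hqpos : 0 < q := div_pos (by linarith) hCpos
  have hqC : q * ((2:ℝ)^(μ+1) - 2) = 1 - p₁ := div_mul_cancel₀ _ (ne_of_gt hCpos)
  clear_value q
  have hqle : q ≤ p₁ := by
    have h1 : 1 ≤ p₁ * ((2:ℝ)^(μ+1) - 1) := by
      rw [div_le_iff₀ (by nlinarith : (0:ℝ) < (2:ℝ)^(μ+1) - 1)] at hp₁
      linarith
    nlinarith [hqC, hCpos]
  have hp2q : p₁ ≤ 2 * q := by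
    rw [lt_div_iff₀ hQpos] at hp₁'
    nlinarith [hqC, hP, hQ2, hqpos]
  have hcard : (univ.erase i0).card = 2^(μ+1) - 2 := by
    rw [Finset.card_erase_of_mem (mem_univ _), Finset.card_univ, Fintype.card_fin]
    omega
  have hcast : ((2^(μ+1) - 2 : ℕ) : ℝ) = (2:ℝ)^(μ+1) - 2 := by
    rw [Nat.cast_sub (by omega)]; push_cast; ring
  -- Part 1 : Kraft sum is exactly 1
  have hkraft : ∑ i, (2 : ℝ) ^ (-(l i : ℝ)) = 1 := by
    rw [← Finset.sum_erase_add univ _ (mem_univ i0)]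
    have h1 : ∑ i ∈ univ.erase i0, (2:ℝ) ^ (-(l i : ℝ))
        = ((2^(μ+1) - 2 : ℕ) : ℝ) * (2:ℝ) ^ (-(((μ+1:ℕ)):ℝ)) := by
      rw [Finset.sum_congr rfl (fun i hi => by rw [hli i (Finset.ne_of_mem_erase hi)]),
        Finset.sum_const, hcard, nsmul_eq_mul]
    rw [h1, hl0, hcast]
    have h2 : (2:ℝ) ^ (-(((μ+1:ℕ)):ℝ)) = ((2:ℝ)^(μ+1))⁻¹ := by
      rw [Real.rpow_neg two_pos.le, Real.rpow_natCast]
    have h3 : (2:ℝ) ^ (-(μ:ℝ)) = ((2:ℝ)^μ)⁻¹ := by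
      rw [Real.rpow_neg two_pos.le, Real.rpow_natCast]
    rw [h2, h3, hP]
    field_simp
    ring
  -- The value of the defining sum
  have hsumval : ∑ i, (p i) ^ (1 + d) * (2 : ℝ) ^ (d * (l i : ℝ))
      = (2:ℝ)^(d*(μ:ℝ)) *
        (p₁ ^ (1 + d) + (1 - p₁) ^ (1 + d) * ((2 : ℝ) ^ (μ : ℝ) - 1) ^ (-d)) := by
    rw [← Finset.sum_erase_add univ _ (mem_univ i0)]
    have h1 : ∑ i ∈ univ.erase i0, (p i) ^ (1 + d) * (2:ℝ) ^ (d * (l i : ℝ))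
        = ((2^(μ+1) - 2 : ℕ) : ℝ) * (q ^ (1+d) * (2:ℝ) ^ (d * ((μ+1:ℕ):ℝ))) := by
      rw [Finset.sum_congr rfl (fun i hi => by
        rw [hli i (Finset.ne_of_mem_erase hi), hpi i (Finset.ne_of_mem_erase hi)]),
        Finset.sum_const, hcard, nsmul_eq_mul]
    rw [h1, hl0, hp0, hcast]
    have key : ((2:ℝ)^(μ+1) - 2) * (q ^ (1+d) * (2:ℝ) ^ (d * ((μ+1:ℕ):ℝ)))
        = (2:ℝ)^(d*(μ:ℝ)) * ((1 - p₁) ^ (1 + d) * ((2 : ℝ) ^ (μ : ℝ) - 1) ^ (-d)) := by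
      have e1 : (d * ((μ+1:ℕ):ℝ)) = d*(μ:ℝ) + d := by push_cast; ring
      rw [e1, Real.rpow_add two_pos]
      have hC1 : (2:ℝ)^(μ+1) - 2 = 2 * ((2:ℝ)^((μ:ℝ)) - 1) := by rw [hQr]; rw [hP]; ring
      have hQ1pos : (0:ℝ) < (2:ℝ)^((μ:ℝ)) - 1 := by rw [hQr]; linarith
      have hq' : q = (1 - p₁) * (((2:ℝ)^(μ+1) - 2))⁻¹ := by rw [hq]; ring
      have e2 : q ^ (1+d) = (1-p₁)^(1+d) * (((2:ℝ)^(μ+1) - 2) ^ (1+d))⁻¹ := by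
        rw [hq', Real.mul_rpow (by linarith) (by positivity),
          Real.inv_rpow (le_of_lt hCpos)]
      have e3 : ((2:ℝ)^(μ+1) - 2) * (((2:ℝ)^(μ+1) - 2)^(1+d))⁻¹
          = ((2:ℝ)^(μ+1) - 2)^(-d) := by
        calc ((2:ℝ)^(μ+1) - 2) * (((2:ℝ)^(μ+1) - 2)^(1+d))⁻¹
            = ((2:ℝ)^(μ+1) - 2)^(1:ℝ) * ((2:ℝ)^(μ+1) - 2)^(-(1+d)) := by
              rw [Real.rpow_one, Real.rpow_neg (le_of_lt hCpos)]
          _ = ((2:ℝ)^(μ+1) - 2)^((1:ℝ) + -(1+d)) := (Real.rpow_add hCpos _ _).symm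
          _ = ((2:ℝ)^(μ+1) - 2)^(-d) := by norm_num
      have e4 : ((2:ℝ)^(μ+1) - 2)^(-d) = (2:ℝ)^(-d) * ((2:ℝ)^((μ:ℝ)) - 1)^(-d) := by
        rw [hC1, Real.mul_rpow two_pos.le hQ1pos.le]
      have e5 : (2:ℝ)^(-d) * (2:ℝ)^(d:ℝ) = 1 := by
        rw [← Real.rpow_add two_pos]; simp
      rw [e2]
      linear_combination ((1-p₁)^(1+d) * (2:ℝ)^(d*(μ:ℝ)) * (2:ℝ)^(d:ℝ)) * e3
        + ((1-p₁)^(1+d) * (2:ℝ)^(d*(μ:ℝ)) * (2:ℝ)^(d:ℝ)) * e4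
        + ((1-p₁)^(1+d) * (2:ℝ)^(d*(μ:ℝ)) * ((2:ℝ)^((μ:ℝ))-1)^(-d)) * e5
    rw [key]
    ring
  -- Part 2: the closed form of the redundancy
  have hXpos : 0 < p₁ ^ (1 + d) + (1 - p₁) ^ (1 + d) * ((2 : ℝ) ^ (μ : ℝ) - 1) ^ (-d) := by
    have h1 : (0:ℝ) < p₁ ^ (1+d) := Real.rpow_pos_of_pos hp₁pos _
    have h2 : (0:ℝ) ≤ (1 - p₁) ^ (1 + d) := Real.rpow_nonneg (by linarith) _
    have h3 : (0:ℝ) ≤ ((2 : ℝ) ^ (μ : ℝ) - 1) ^ (-d) := by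
      apply Real.rpow_nonneg
      rw [hQr]; linarith
    nlinarith
  have hval : expRedundancy n d p l = (μ : ℝ) + (1 / d) * Real.logb 2
      (p₁ ^ (1 + d) + (1 - p₁) ^ (1 + d) * ((2 : ℝ) ^ (μ : ℝ) - 1) ^ (-d)) := by
    unfold expRedundancy
    rw [hsumval, Real.logb_mul (ne_of_gt (Real.rpow_pos_of_pos two_pos _)) (ne_of_gt hXpos),
      Real.logb_rpow two_pos (by norm_num), mul_add]
    have hdd : 1/d*(d*(μ:ℝ)) = (μ:ℝ) := by field_simp
    rw [hdd]
  -- Part 3: optimality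
  have hmain : ∀ l' : Fin n → ℕ, IsCode n l' →
      expRedundancy n d p l ≤ expRedundancy n d p l' := by
    intro l' hc
    obtain ⟨hc1, hc2⟩ := hc
    have hd1 : 0 < d + 1 := by linarith
    set w1 : ℝ := p₁ ^ (1+d) with hw1
    set wq : ℝ := q ^ (1+d) with hwq
    have hw1pos : 0 < w1 := hw1 ▸ Real.rpow_pos_of_pos hp₁pos _
    have hwqpos : 0 < wq := hwq ▸ Real.rpow_pos_of_pos hqpos _
    clear_value w1 wq
    have hs0 : (0:ℝ) ≤ |(2:ℝ)^d - 1| := abs_nonneg _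
    set lam : ℝ := 2 * w1 * |(2:ℝ)^d - 1| * (2:ℝ)^((μ:ℝ)*(d+1)) with hlamdef
    have hlamnn : 0 ≤ lam := by
      have : (0:ℝ) < (2:ℝ)^((μ:ℝ)*(d+1)) := Real.rpow_pos_of_pos two_pos _
      positivity
    clear_value lam
    set ε : ℝ := if 0 < d then 1 else -1 with hεdef
    clear_value ε
    have hε : ε * ((2:ℝ)^d - 1) = |(2:ℝ)^d - 1| := by
      by_cases h : 0 < d
      · have h1 : 1 < (2:ℝ)^d :=
          (Real.one_lt_rpow_iff_of_pos two_pos).mpr (Or.inl ⟨one_lt_two, h⟩)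
        rw [hεdef, if_pos h, one_mul, abs_of_pos (by linarith)]
      · have hdneg : d < 0 := lt_of_le_of_ne (not_lt.mp h) hd0
        have h1 : (2:ℝ)^d < 1 := Real.rpow_lt_one_of_one_lt_of_neg one_lt_two hdneg
        rw [hεdef, if_neg h, abs_of_neg (by linarith)]; ring
    have hwq_le : wq ≤ w1 := by
      rw [hwq, hw1]; exact Real.rpow_le_rpow hqpos.le hqle (by linarith)
    have hw1_le : w1 ≤ wq * (2:ℝ)^(1+d) := by
      rw [hwq, hw1]
      calc p₁ ^ (1+d) ≤ (2*q) ^ (1+d) := Real.rpow_le_rpow hp₁pos.le hp2q (by linarith)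
      _ = (2:ℝ)^(1+d) * q ^ (1+d) := by rw [Real.mul_rpow two_pos.le hqpos.le]
      _ = q ^ (1+d) * (2:ℝ)^(1+d) := by ring
    have hhi1 : lam ≤ 2*w1*|(2:ℝ)^d - 1| * (2:ℝ)^((μ:ℝ)*(d+1)) := hlamdef.le
    have hlo1 : 2*w1*|(2:ℝ)^d - 1| * (2:ℝ)^(((μ:ℝ)-1)*(d+1)) ≤ lam := by
      rw [hlamdef]
      exact mul_le_mul_of_nonneg_left
        (Real.rpow_le_rpow_of_exponent_le one_le_two
          (mul_le_mul_of_nonneg_right (by linarith : (μ:ℝ)-1 ≤ (μ:ℝ)) hd1.le))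
        (by positivity)
    have hlo2 : 2*wq*|(2:ℝ)^d - 1| * (2:ℝ)^(((((μ+1:ℕ)):ℝ)-1)*(d+1)) ≤ lam := by
      rw [hlamdef, show ((((μ+1:ℕ)):ℝ)-1) = (μ:ℝ) by push_cast; ring]
      gcongr
    have hhi2 : lam ≤ 2*wq*|(2:ℝ)^d - 1| * (2:ℝ)^((((μ+1:ℕ)):ℝ)*(d+1)) := by
      have e : ((((μ+1:ℕ)):ℝ))*(d+1) = (μ:ℝ)*(d+1) + (1+d) := by push_cast; ring
      rw [e, Real.rpow_add two_pos]
      calc lam = 2*w1*|(2:ℝ)^d - 1| * (2:ℝ)^((μ:ℝ)*(d+1)) := hlamdef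
      _ ≤ 2*(wq * (2:ℝ)^(1+d))*|(2:ℝ)^d - 1| * (2:ℝ)^((μ:ℝ)*(d+1)) := by
          gcongr
      _ = 2*wq*|(2:ℝ)^d - 1| * ((2:ℝ)^((μ:ℝ)*(d+1)) * (2:ℝ)^(1+d)) := by ring
    have hpt : ∀ i : Fin n,
        ε * (p i)^(1+d) * (2:ℝ)^(d*((l i:ℕ):ℝ)) + lam * (2:ℝ)^(-((l i:ℕ):ℝ))
        ≤ ε * (p i)^(1+d) * (2:ℝ)^(d*((l' i:ℕ):ℝ)) + lam * (2:ℝ)^(-((l' i:ℕ):ℝ)) := by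
      intro i
      by_cases h : i = i0
      · rw [h, hp0, hl0, ← hw1]
        have := key_unimodal d ε lam w1 hw1pos hε hd1 μ hlo1 hhi1 (l' i0)
        rw [mul_comm (μ:ℝ) d, mul_comm ((l' i0 : ℕ):ℝ) d] at this
        exact this
      · rw [hpi i h, hli i h, ← hwq]
        have := key_unimodal d ε lam wq hwqpos hε hd1 (μ+1) hlo2 hhi2 (l' i)
        rw [mul_comm (((μ+1:ℕ)):ℝ) d, mul_comm ((l' i : ℕ):ℝ) d] at this
        exact this
    have hsum := Finset.sum_le_sum (f := fun i =>
        ε * (p i)^(1+d) * (2:ℝ)^(d*((l i:ℕ):ℝ)) + lam * (2:ℝ)^(-((l i:ℕ):ℝ)))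
      (g := fun i =>
        ε * (p i)^(1+d) * (2:ℝ)^(d*((l' i:ℕ):ℝ)) + lam * (2:ℝ)^(-((l' i:ℕ):ℝ)))
      (s := univ) (fun i _ => hpt i)
    rw [Finset.sum_add_distrib, Finset.sum_add_distrib] at hsum
    simp only [mul_assoc, ← Finset.mul_sum] at hsum
    rw [hkraft] at hsum
    have hεS : ε * (∑ i, (p i)^(1+d) * (2:ℝ)^(d*((l i:ℕ):ℝ)))
        ≤ ε * (∑ i, (p i)^(1+d) * (2:ℝ)^(d*((l' i:ℕ):ℝ))) := by
      have h2 : lam * (∑ i, (2:ℝ)^(-((l' i:ℕ):ℝ))) ≤ lam * 1 :=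
        mul_le_mul_of_nonneg_left hc2 hlamnn
      linarith [hsum, h2]
    have hppos : ∀ i : Fin n, 0 < p i := by
      intro i
      by_cases h : i = i0
      · rw [h, hp0]; exact hp₁pos
      · rw [hpi i h]; exact hqpos
    have hSpos : ∀ t : Fin n → ℕ, 0 < ∑ i, (p i)^(1+d) * (2:ℝ)^(d*((t i:ℕ):ℝ)) := by
      intro t
      apply Finset.sum_pos (fun i _ => ?_) ⟨i0, mem_univ i0⟩
      exact mul_pos (Real.rpow_pos_of_pos (hppos i) _) (Real.rpow_pos_of_pos two_pos _)
    unfold expRedundancy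
    rcases lt_or_gt_of_ne hd0 with hneg | hpos
    · have hεv : ε = -1 := by rw [hεdef, if_neg (by linarith)]
      rw [hεv] at hεS
      have hSS : (∑ i, (p i)^(1+d) * (2:ℝ)^(d*((l' i:ℕ):ℝ)))
          ≤ ∑ i, (p i)^(1+d) * (2:ℝ)^(d*((l i:ℕ):ℝ)) := by linarith
      have hlog := (Real.logb_le_logb one_lt_two (hSpos l') (hSpos l)).mpr hSS
      have h1d : (1:ℝ)/d ≤ 0 := le_of_lt (div_neg_of_pos_of_neg one_pos hneg)
      exact mul_le_mul_of_nonpos_left hlog h1d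
    · have hεv : ε = 1 := by rw [hεdef, if_pos hpos]
      rw [hεv, one_mul, one_mul] at hεS
      have hlog := (Real.logb_le_logb one_lt_two (hSpos l) (hSpos l')).mpr hεS
      have h1d : (0:ℝ) ≤ 1/d := by positivity
      exact mul_le_mul_of_nonneg_left hlog h1d
  -- wrap up the sInf
  have hcode_l : IsCode n l := by
    refine ⟨fun i => ?_, le_of_eq hkraft⟩
    by_cases h : i = i0
    · rw [h, hl0]; exact hμ
    · rw [hli i h]; omega
  have hmem : expRedundancy n d p l ∈
      { r | ∃ l' : Fin n → ℕ, IsCode n l' ∧ r = expRedundancy n d p l' } :=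
    ⟨l, hcode_l, rfl⟩
  have hlb : ∀ r ∈ { r | ∃ l' : Fin n → ℕ, IsCode n l' ∧ r = expRedundancy n d p l' },
      expRedundancy n d p l ≤ r := by
    rintro r ⟨l', hc', rfl⟩
    exact hmain l' hc'
  refine ⟨hkraft, hval, ?_⟩
  unfold expRedundancyOpt
  exact le_antisymm (le_csInf ⟨_, hmem⟩ hlb) (csInf_le ⟨_, hlb⟩ hmem)

theorem stmt_11 (d : ℝ) (hd : -1 < d) (hd0 : d ≠ 0) (μ : ℕ) (hμ : 1 ≤ μ)
    (p₁ : ℝ) (hp₁ : 1 / ((2 : ℝ) ^ (μ + 1) - 1) ≤ p₁) (hp₁' : p₁ < 1 / (2 : ℝ) ^ μ)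
    (p : Fin (2 ^ (μ + 1) - 1) → ℝ)
    (hp : ∀ i, p i = if i = ⟨0, by have : 1 < 2 ^ (μ + 1) := Nat.one_lt_two_pow_iff.mpr (by omega); omega⟩ then p₁
      else (1 - p₁) / ((2 : ℝ) ^ (μ + 1) - 2))
    (l : Fin (2 ^ (μ + 1) - 1) → ℕ)
    (hl : ∀ i, l i = if i = ⟨0, by have : 1 < 2 ^ (μ + 1) := Nat.one_lt_two_pow_iff.mpr (by omega); omega⟩ then μ else μ + 1) :
    ∑ i, (2 : ℝ) ^ (-(l i : ℝ)) = 1 ∧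
    expRedundancy (2 ^ (μ + 1) - 1) d p l = (μ : ℝ) + (1 / d) * Real.logb 2
      (p₁ ^ (1 + d) + (1 - p₁) ^ (1 + d) * ((2 : ℝ) ^ (μ : ℝ) - 1) ^ (-d)) ∧
    expRedundancy (2 ^ (μ + 1) - 1) d p l = expRedundancyOpt (2 ^ (μ + 1) - 1) d p := by
  have hn1 : 1 < 2 ^ (μ + 1) := Nat.one_lt_two_pow_iff.mpr (by omega)
  refine main_aux d hd hd0 μ (2 ^ (μ + 1) - 1) hμ rfl p₁ hp₁ hp₁' p l
    ⟨0, by omega⟩ ?_ ?_ ?_ ?_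
  · rw [hp]; exact if_pos rfl
  · intro i hi; rw [hp]; exact if_neg hi
  · rw [hl]; exact if_pos rfl
  · intro i hi; rw [hl]; exact if_neg hi
end

section
/- Let d > −1 with d ≠ 0 and let q ∈ (1/2, 1). For ε ∈ (0, 1−q), let p^ε be the probability vector on 3 symbols (q, 1−q−ε, ε). Then the optimal exponential redundancy R^d_opt(p^ε) tends, as ε → 0⁺, to 1 + (1/d)·log₂( q^(1+d) + 2^d·(1−q)^(1+d) ); that is, the upper bound ω^d(q) (whose infimum is attained at λ = 1 when q > 1/2) is approached by these three-symbol distributions. -/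
open Real Finset Filter

/-! Lengths `(1, 2, 3)` form a code, so `R^d_opt(p^ε) ≤ R^d(p^ε, (1, 2, 3))`. Conversely, by Kraft
the first two symbols cannot both get length `1`, and since `R^d(p, l)` is monotone in `l` and
prefers the shorter word on the likelier symbol, every code costs at least `R^d(p^ε, (1, 2, 1))`.
The two bounds differ only in the weight of the symbol of probability `ε`, whose contribution
`ε^(1+d)` vanishes as `ε → 0⁺`. -/

/-- The factor `d` lets `d · ∑ p_i^(1+d) 2^(d l_i)` order the redundancies `R^d(p, l)` for both
signs of `d` at once. -/
lemma monotone_mul_two_rpow_mul (d : ℝ) : Monotone fun x : ℝ => d * (2 : ℝ) ^ (d * x) := by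
  intro x y hxy
  rcases le_or_gt 0 d with hd | hd
  · exact mul_le_mul_of_nonneg_left
      (rpow_le_rpow_of_exponent_le one_le_two (mul_le_mul_of_nonneg_left hxy hd)) hd
  · exact mul_le_mul_of_nonpos_left
      (rpow_le_rpow_of_exponent_le one_le_two (mul_le_mul_of_nonpos_left hxy hd.le)) hd.le

lemma one_div_mul_logb_le_of_mul_le {d a b : ℝ} (hd : d ≠ 0) (ha : 0 < a) (hb : 0 < b)
    (h : d * a ≤ d * b) : 1 / d * logb 2 a ≤ 1 / d * logb 2 b := by
  rcases hd.lt_or_gt with hd | hd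
  · exact mul_le_mul_of_nonpos_left
      (logb_le_logb_of_le one_lt_two hb ((mul_le_mul_left_of_neg hd).1 h)) (one_div_neg.2 hd).le
  · exact mul_le_mul_of_nonneg_left
      (logb_le_logb_of_le one_lt_two ha (le_of_mul_le_mul_left h hd)) (by positivity)

section Redundancy

variable {n : ℕ} {d : ℝ} {p : Fin n → ℝ} {l l' : Fin n → ℕ}

lemma expRedundancy_le_of_mul_le [NeZero n] (hd : d ≠ 0) (hp : ∀ i, 0 < p i)
    (h : d * ∑ i, p i ^ (1 + d) * (2 : ℝ) ^ (d * (l i : ℝ)) ≤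
      d * ∑ i, p i ^ (1 + d) * (2 : ℝ) ^ (d * (l' i : ℝ))) :
    expRedundancy n d p l ≤ expRedundancy n d p l' := by
  refine one_div_mul_logb_le_of_mul_le hd ?_ ?_ h <;>
    exact sum_pos (fun i _ => by have := hp i; positivity) univ_nonempty

lemma expRedundancy_mono [NeZero n] (hd : d ≠ 0) (hp : ∀ i, 0 < p i) (hll' : l ≤ l') :
    expRedundancy n d p l ≤ expRedundancy n d p l' := by
  refine expRedundancy_le_of_mul_le hd hp ?_
  simp only [mul_sum, mul_left_comm d]
  exact sum_le_sum fun i _ => mul_le_mul_of_nonneg_left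
    (monotone_mul_two_rpow_mul d (Nat.cast_le.2 (hll' i))) (rpow_pos_of_pos (hp i) _).le

lemma IsCode.two_le_or_two_le (hl : IsCode n l) {i j k : Fin n} (hij : i ≠ j) (hik : i ≠ k)
    (hjk : j ≠ k) : 2 ≤ l i ∨ 2 ≤ l j := by
  by_contra! h
  have hi : l i = 1 := by have := hl.1 i; omega
  have hj : l j = 1 := by have := hl.1 j; omega
  have hpair : (2 : ℝ) ^ (-(l i : ℝ)) + 2 ^ (-(l j : ℝ)) ≤
      ∑ m ∈ univ.erase k, (2 : ℝ) ^ (-(l m : ℝ)) :=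
    add_le_sum (f := fun m => (2 : ℝ) ^ (-(l m : ℝ))) (fun _ _ => by positivity)
      (mem_erase.2 ⟨hik, mem_univ _⟩) (mem_erase.2 ⟨hjk, mem_univ _⟩) hij
  have htotal := add_sum_erase univ (fun m => (2 : ℝ) ^ (-(l m : ℝ))) (mem_univ k)
  have hk : (0 : ℝ) < 2 ^ (-(l k : ℝ)) := by positivity
  rw [hi, hj, show (2 : ℝ) ^ (-((1 : ℕ) : ℝ)) = 1 / 2 by norm_num] at hpair
  linarith [hl.2]

lemma expRedundancyOpt_le (hl : IsCode n l) {r : ℝ}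
    (hr : ∀ l', IsCode n l' → r ≤ expRedundancy n d p l') :
    expRedundancyOpt n d p ≤ expRedundancy n d p l :=
  csInf_le ⟨r, by rintro _ ⟨l', hl', rfl⟩; exact hr l' hl'⟩ ⟨l, hl, rfl⟩

lemma le_expRedundancyOpt (hl : IsCode n l) {r : ℝ}
    (hr : ∀ l', IsCode n l' → r ≤ expRedundancy n d p l') :
    r ≤ expRedundancyOpt n d p :=
  le_csInf ⟨_, l, hl, rfl⟩ (by rintro _ ⟨l', hl', rfl⟩; exact hr l' hl')

lemma continuousAt_expRedundancy {p : ℝ → Fin n → ℝ} {t : ℝ}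
    (hp : ∀ i, ContinuousAt (fun s => p s i) t) (hd : 0 < 1 + d)
    (hS : ∑ i, p t i ^ (1 + d) * (2 : ℝ) ^ (d * (l i : ℝ)) ≠ 0) :
    ContinuousAt (fun s => expRedundancy n d (p s) l) t := by
  refine continuousAt_const.mul (ContinuousAt.logb ?_ hS)
  exact tendsto_finsetSum _ fun i _ =>
    ((hp i).rpow_const (Or.inr hd.le)).mul continuousAt_const

end Redundancy

lemma isCode_one_two_three : IsCode 3 ![1, 2, 3] := by
  refine ⟨fun i => by fin_cases i <;> simp, ?_⟩
  simp only [Fin.sum_univ_three, Matrix.cons_val_zero, Matrix.cons_val_one, Matrix.cons_val_two,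
    Matrix.head_cons, Matrix.tail_cons, rpow_neg zero_le_two, Nat.cast_ofNat,
    Nat.cast_one]
  norm_num

section ThreeSymbols

variable {d : ℝ} {p : Fin 3 → ℝ}

lemma expRedundancy_one_two_le_two_one (hd : 0 < 1 + d) (hd0 : d ≠ 0) (hp : ∀ i, 0 < p i)
    (hp10 : p 1 ≤ p 0) (c : ℕ) :
    expRedundancy 3 d p ![1, 2, c] ≤ expRedundancy 3 d p ![2, 1, c] := by
  refine expRedundancy_le_of_mul_le hd0 hp ?_
  have hpow : p 1 ^ (1 + d) ≤ p 0 ^ (1 + d) := rpow_le_rpow (hp 1).le hp10 hd.le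
  have h12 := monotone_mul_two_rpow_mul d (one_le_two : (1 : ℝ) ≤ 2)
  simp only [Fin.sum_univ_three, Matrix.cons_val_zero, Matrix.cons_val_one, Matrix.cons_val_two,
    Matrix.head_cons, Matrix.tail_cons, Nat.cast_one, Nat.cast_ofNat] at h12 ⊢
  nlinarith [mul_le_mul_of_nonneg_left h12 (sub_nonneg.2 hpow)]

lemma expRedundancy_one_two_one_le (hd : 0 < 1 + d) (hd0 : d ≠ 0) (hp : ∀ i, 0 < p i)
    (hp10 : p 1 ≤ p 0) {l : Fin 3 → ℕ} (hl : IsCode 3 l) :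
    expRedundancy 3 d p ![1, 2, 1] ≤ expRedundancy 3 d p l := by
  have hle : ∀ a b : ℕ, a ≤ l 0 → b ≤ l 1 → ![a, b, 1] ≤ l := by
    intro a b ha hb i
    fin_cases i
    exacts [ha, hb, hl.1 2]
  rcases hl.two_le_or_two_le (i := 0) (j := 1) (k := 2) (by decide) (by decide) (by decide)
    with h0 | h1
  · exact (expRedundancy_one_two_le_two_one hd hd0 hp hp10 1).trans
      (expRedundancy_mono hd0 hp (hle 2 1 h0 (hl.1 1)))
  · exact expRedundancy_mono hd0 hp (hle 1 2 (hl.1 0) h1)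

lemma expRedundancyOpt_three_bounds (hd : 0 < 1 + d) (hd0 : d ≠ 0) (hp : ∀ i, 0 < p i)
    (hp10 : p 1 ≤ p 0) :
    expRedundancyOpt 3 d p ∈
      Set.Icc (expRedundancy 3 d p ![1, 2, 1]) (expRedundancy 3 d p ![1, 2, 3]) :=
  have hlow := fun l (hl : IsCode 3 l) => expRedundancy_one_two_one_le hd hd0 hp hp10 hl
  ⟨le_expRedundancyOpt isCode_one_two_three hlow, expRedundancyOpt_le isCode_one_two_three hlow⟩

end ThreeSymbols

lemma expRedundancy_one_two_of_eq_zero {d q : ℝ} (hd : 0 < 1 + d) (hd0 : d ≠ 0) (hq : 0 < q)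
    (hq1 : q < 1) (c : ℕ) :
    expRedundancy 3 d ![q, 1 - q, 0] ![1, 2, c] =
      1 + 1 / d * logb 2 (q ^ (1 + d) + (2 : ℝ) ^ d * (1 - q) ^ (1 + d)) := by
  have hpos : 0 < q ^ (1 + d) + (2 : ℝ) ^ d * (1 - q) ^ (1 + d) := by
    have : 0 < 1 - q := by linarith
    positivity
  have hsum : ∑ i, (![q, 1 - q, 0] i) ^ (1 + d) * (2 : ℝ) ^ (d * ((![1, 2, c] i : ℕ) : ℝ)) =
      (2 : ℝ) ^ d * (q ^ (1 + d) + (2 : ℝ) ^ d * (1 - q) ^ (1 + d)) := by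
    simp only [Fin.sum_univ_three, Matrix.cons_val_zero, Matrix.cons_val_one, Matrix.cons_val_two,
      Matrix.head_cons, Matrix.tail_cons, Nat.cast_one, Nat.cast_ofNat, zero_rpow hd.ne', mul_one,
      zero_mul, add_zero, show d * 2 = d + d by ring, rpow_add two_pos]
    ring
  rw [expRedundancy, hsum, logb_mul (by positivity) hpos.ne', logb_rpow two_pos one_lt_two.ne',
    mul_add, one_div_mul_cancel hd0]

lemma tendsto_expRedundancy_one_two {d q : ℝ} (hd : 0 < 1 + d) (hd0 : d ≠ 0) (hq : 0 < q)
    (hq1 : q < 1) (c : ℕ) :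
    Tendsto (fun ε : ℝ => expRedundancy 3 d ![q, 1 - q - ε, ε] ![1, 2, c]) (nhds 0)
      (nhds (1 + 1 / d * logb 2 (q ^ (1 + d) + (2 : ℝ) ^ d * (1 - q) ^ (1 + d)))) := by
  have hS : ∑ i, (![q, 1 - q - 0, 0] i) ^ (1 + d) * (2 : ℝ) ^ (d * ((![1, 2, c] i : ℕ) : ℝ))
      ≠ 0 := by
    have : 0 < 1 - q := by linarith
    refine (sum_pos' (fun i _ => ?_) ⟨0, mem_univ _, ?_⟩).ne'
    · fin_cases i <;> simp <;> positivity
    · simp only [sub_zero, Matrix.cons_val_zero, Nat.cast_one, mul_one]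
      positivity
  have hcont := continuousAt_expRedundancy (p := fun ε : ℝ => ![q, 1 - q - ε, ε]) (t := 0)
    (fun i => by fin_cases i <;> simp <;> fun_prop) hd hS
  simpa [expRedundancy_one_two_of_eq_zero hd hd0 hq hq1] using hcont.tendsto

theorem stmt_12 (d : ℝ) (hd : -1 < d) (hd0 : d ≠ 0)
    (q : ℝ) (hq : q ∈ Set.Ioo (1 / 2 : ℝ) 1) :
    Filter.Tendsto (fun ε : ℝ => expRedundancyOpt 3 d ![q, 1 - q - ε, ε])
      (nhdsWithin 0 (Set.Ioo 0 (1 - q)))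
      (nhds (1 + (1 / d) * Real.logb 2
        (q ^ (1 + d) + (2 : ℝ) ^ d * (1 - q) ^ (1 + d)))) := by
  obtain ⟨hq2, hq1⟩ := hq
  have hd1 : 0 < 1 + d := by linarith
  have hbounds : ∀ᶠ ε in nhdsWithin 0 (Set.Ioo 0 (1 - q)),
      expRedundancyOpt 3 d ![q, 1 - q - ε, ε] ∈ Set.Icc
        (expRedundancy 3 d ![q, 1 - q - ε, ε] ![1, 2, 1])
        (expRedundancy 3 d ![q, 1 - q - ε, ε] ![1, 2, 3]) := by
    filter_upwards [self_mem_nhdsWithin] with ε ⟨hε0, hε1⟩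
    refine expRedundancyOpt_three_bounds hd1 hd0 (fun i => ?_) ?_
    · fin_cases i <;> simp <;> linarith
    · simp only [Matrix.cons_val_zero, Matrix.cons_val_one]
      linarith
  have hlim (c : ℕ) := (tendsto_expRedundancy_one_two hd1 hd0 (by linarith) hq1 c).mono_left
    (nhdsWithin_le_nhds (s := Set.Ioo 0 (1 - q)))
  exact tendsto_of_tendsto_of_tendsto_of_le_of_le' (hlim 1) (hlim 3)
    (hbounds.mono fun _ h => h.1) (hbounds.mono fun _ h => h.2)
end

section
/- Let −1 < d < 0 and let p_1 ∈ (0.25, 0.4). Let p be the probability vector on 4 symbols ( p_1, (1−p_1)/3, (1−p_1)/3, (1−p_1)/3 ). Then every codeword-length vector l attaining the optimal exponential redundancy R^d_opt(p) has l_1 = 2; in particular no optimal code has l_1 = 1. -/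
open Real Finset

/-!
Put `s = 2^d ∈ (1/2, 1)`, `q = (1 - p₁)/3`, `A = p₁^(1+d)` and `B = q^(1+d)`. Since `d < 0`,
minimising `R^d` means maximising `A s^l₀ + B (s^l₁ + s^l₂ + s^l₃)`, and `p₁ ∈ (1/4, 2/5)` means
`q < p₁ < 2q`, hence `B < A < 2sB`.

The points `(2^-n, s^n)` lie on the concave curve `x ↦ x^(-d)`, hence below the secant through
the points `n = 1, 2` and below the one through `n = 2, 3`. Bounding every `s^lᵢ` by a secant and
summing against the Kraft inequality compares any code with the code `(2, 2, 2, 2)`: the secant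
through `1, 2` settles `l₀ ≥ 2` (with strict loss for `l₀ ≥ 3`, as `B < A`), the secant through
`2, 3` settles `l₀ = 1` (with strict loss, as `A < 2sB`).
-/

noncomputable def expMoment (n : ℕ) (d : ℝ) (p : Fin n → ℝ) (l : Fin n → ℕ) : ℝ :=
  ∑ i, p i ^ (1 + d) * (2 : ℝ) ^ (d * (l i : ℝ))

section Reduction

variable {n : ℕ} {d : ℝ} {p : Fin n → ℝ}

lemma strictAntiOn_one_div_mul_logb (hd : d < 0) :
    StrictAntiOn (fun x : ℝ => 1 / d * logb 2 x) (Set.Ioi 0) :=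
  fun _ hx _ _ hxy => mul_lt_mul_of_neg_left (logb_lt_logb one_lt_two hx hxy) (one_div_neg.2 hd)

lemma expMoment_pos [NeZero n] (hp : ∀ i, 0 < p i) (l : Fin n → ℕ) : 0 < expMoment n d p l :=
  sum_pos (fun i _ => by have := hp i; positivity) univ_nonempty

lemma expRedundancy_lt_iff [NeZero n] (hd : d < 0) (hp : ∀ i, 0 < p i) {l l' : Fin n → ℕ} :
    expRedundancy n d p l < expRedundancy n d p l' ↔ expMoment n d p l' < expMoment n d p l :=
  (strictAntiOn_one_div_mul_logb hd).lt_iff_gt (expMoment_pos hp l) (expMoment_pos hp l')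

lemma expRedundancy_eq_iff [NeZero n] (hd : d < 0) (hp : ∀ i, 0 < p i) {l l' : Fin n → ℕ} :
    expRedundancy n d p l = expRedundancy n d p l' ↔ expMoment n d p l = expMoment n d p l' :=
  (strictAntiOn_one_div_mul_logb hd).injOn.eq_iff (expMoment_pos hp l) (expMoment_pos hp l')

lemma expRedundancy_eq_opt_iff [NeZero n] (hd : d < 0) (hp : ∀ i, 0 < p i) {l₀ : Fin n → ℕ}
    (hl₀ : IsCode n l₀) (hmax : ∀ l, IsCode n l → expMoment n d p l ≤ expMoment n d p l₀)
    (l : Fin n → ℕ) :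
    expRedundancy n d p l = expRedundancyOpt n d p ↔ expMoment n d p l = expMoment n d p l₀ := by
  have hopt : expRedundancyOpt n d p = expRedundancy n d p l₀ := by
    refine IsLeast.csInf_eq ⟨⟨l₀, hl₀, rfl⟩, ?_⟩
    rintro _ ⟨l', hl', rfl⟩
    exact not_lt.1 fun h => (hmax l' hl').not_gt ((expRedundancy_lt_iff hd hp).1 h)
  rw [hopt, expRedundancy_eq_iff hd hp]

lemma IsCode.sum_inv_two_pow_le {l : Fin n → ℕ} (hl : IsCode n l) :
    ∑ i, ((2 : ℝ) ^ l i)⁻¹ ≤ 1 := by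
  simpa only [rpow_neg zero_le_two, rpow_natCast] using hl.2

end Reduction

section Secant

variable {s : ℝ}

-- `(1 - s^k) / (1 - s) = ∑_{j<k} s^j ≥ ∑_{j<k} 2^-j`
lemma two_mul_one_sub_mul_le_one_sub_pow (hs : 1 / 2 ≤ s) (hs1 : s ≤ 1) (k : ℕ) :
    2 * (1 - s) * (1 - ((2 : ℝ) ^ k)⁻¹) ≤ 1 - s ^ k := by
  induction k with
  | zero => simp
  | succ k ih =>
    have hpow : ((2 : ℝ) ^ k)⁻¹ ≤ s ^ k := by
      rw [← inv_pow]; exact pow_le_pow_left₀ (by norm_num) (by linarith) k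
    rw [pow_succ, pow_succ, mul_inv]
    nlinarith [mul_le_mul_of_nonneg_left hpow (by linarith : 0 ≤ 1 - s)]

lemma pow_sub_sq_le_secant_one_two (hs : 1 / 2 ≤ s) (hs1 : s ≤ 1) {n : ℕ} (hn : 1 ≤ n) :
    s ^ n - s ^ 2 ≤ 4 * s * (1 - s) * (((2 : ℝ) ^ n)⁻¹ - 1 / 4) := by
  obtain rfl | ⟨k, rfl⟩ : n = 1 ∨ ∃ k, n = k + 2 := by
    rcases n with _ | _ | k <;> simp_all
  · exact le_of_eq (by ring)
  · have h := two_mul_one_sub_mul_le_one_sub_pow hs hs1 k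
    have hu : ((2 : ℝ) ^ k)⁻¹ ≤ 1 := inv_le_one_of_one_le₀ (one_le_pow₀ one_le_two)
    rw [pow_add, pow_add, mul_inv]
    nlinarith [mul_le_mul_of_nonneg_left h (sq_nonneg s),
      mul_nonneg (mul_nonneg (by nlinarith : 0 ≤ 2 * s ^ 2 - s) (by linarith : 0 ≤ 1 - s))
        (by linarith : 0 ≤ 1 - ((2 : ℝ) ^ k)⁻¹)]

lemma pow_sub_sq_le_secant_two_three (hs : 1 / 2 ≤ s) (hs1 : s ≤ 1) {n : ℕ} (hn : 1 ≤ n) :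
    s ^ n - s ^ 2 ≤ 8 * s ^ 2 * (1 - s) * (((2 : ℝ) ^ n)⁻¹ - 1 / 4) := by
  obtain rfl | ⟨k, rfl⟩ : n = 1 ∨ ∃ k, n = k + 2 := by
    rcases n with _ | _ | k <;> simp_all
  · norm_num
    nlinarith [mul_nonneg (mul_nonneg (by linarith : 0 ≤ s) (by linarith : 0 ≤ 1 - s))
      (by linarith : 0 ≤ 2 * s - 1)]
  · have h := two_mul_one_sub_mul_le_one_sub_pow hs hs1 k
    rw [pow_add, pow_add, mul_inv]
    nlinarith [mul_le_mul_of_nonneg_left h (sq_nonneg s)]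

end Secant

section FourSymbols

variable {s A B : ℝ} {l : Fin 4 → ℕ}

lemma IsCode.sum_inv_two_pow_four (hl : IsCode 4 l) :
    ((2 : ℝ) ^ l 0)⁻¹ + ((2 : ℝ) ^ l 1)⁻¹ + ((2 : ℝ) ^ l 2)⁻¹ + ((2 : ℝ) ^ l 3)⁻¹ ≤ 1 := by
  simpa only [Fin.sum_univ_four] using hl.sum_inv_two_pow_le

lemma weighted_pow_sum_sub_le_secant_one_two (hs : 1 / 2 ≤ s) (hs1 : s ≤ 1) (hA : 0 ≤ A)
    (hB : 0 ≤ B) (hl : IsCode 4 l) :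
    A * s ^ l 0 + B * (s ^ l 1 + s ^ l 2 + s ^ l 3) - (A * s ^ 2 + 3 * B * s ^ 2)
      ≤ 4 * s * (1 - s) * (A - B) * (((2 : ℝ) ^ l 0)⁻¹ - 1 / 4) := by
  have h i := pow_sub_sq_le_secant_one_two hs hs1 (hl.1 i)
  linear_combination A * h 0 + B * h 1 + B * h 2 + B * h 3 +
    B * (4 * s * (1 - s)) * hl.sum_inv_two_pow_four

lemma weighted_pow_sum_sub_le_of_head_eq_one (hs : 1 / 2 ≤ s) (hs1 : s ≤ 1) (hB : 0 ≤ B)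
    (hl : IsCode 4 l) (h0 : l 0 = 1) :
    A * s ^ l 0 + B * (s ^ l 1 + s ^ l 2 + s ^ l 3) - (A * s ^ 2 + 3 * B * s ^ 2)
      ≤ s * (1 - s) * (A - 2 * s * B) := by
  have h i := pow_sub_sq_le_secant_two_three hs hs1 (hl.1 i)
  have hk := hl.sum_inv_two_pow_four
  rw [h0] at hk ⊢
  linear_combination B * h 1 + B * h 2 + B * h 3 + B * (8 * s ^ 2 * (1 - s)) * hk

lemma weighted_pow_sum_le (hs : 1 / 2 ≤ s) (hs1 : s ≤ 1) (hB : 0 ≤ B) (hBA : B ≤ A)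
    (hA : A ≤ 2 * s * B) (hl : IsCode 4 l) :
    A * s ^ l 0 + B * (s ^ l 1 + s ^ l 2 + s ^ l 3) ≤ A * s ^ 2 + 3 * B * s ^ 2 := by
  have hs0 : 0 ≤ s * (1 - s) := mul_nonneg (by linarith) (by linarith)
  rcases (hl.1 0).eq_or_lt with h0 | h0
  · have := weighted_pow_sum_sub_le_of_head_eq_one (A := A) hs hs1 hB hl h0.symm
    nlinarith [mul_nonpos_of_nonneg_of_nonpos hs0 (by linarith : A - 2 * s * B ≤ 0)]
  · have := weighted_pow_sum_sub_le_secant_one_two hs hs1 (hB.trans hBA) hB hl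
    have ht : ((2 : ℝ) ^ l 0)⁻¹ ≤ (2 ^ 2)⁻¹ := inv_pow_le_inv_pow_of_le one_le_two h0
    nlinarith [mul_nonpos_of_nonneg_of_nonpos (mul_nonneg hs0 (by linarith : 0 ≤ A - B))
      (by linarith : ((2 : ℝ) ^ l 0)⁻¹ - 1 / 4 ≤ 0)]

lemma weighted_pow_sum_lt_of_head_ne_two (hs : 1 / 2 ≤ s) (hs1 : s < 1) (hBA : B < A)
    (hA : A < 2 * s * B) (hl : IsCode 4 l) (h2 : l 0 ≠ 2) :
    A * s ^ l 0 + B * (s ^ l 1 + s ^ l 2 + s ^ l 3) < A * s ^ 2 + 3 * B * s ^ 2 := by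
  have hB : 0 < B := by nlinarith
  have hs0 : 0 < s * (1 - s) := mul_pos (by linarith) (by linarith)
  rcases (hl.1 0).eq_or_lt with h0 | h0
  · have := weighted_pow_sum_sub_le_of_head_eq_one (A := A) hs hs1.le hB.le hl h0.symm
    nlinarith [mul_neg_of_pos_of_neg hs0 (by linarith : A - 2 * s * B < 0)]
  · have := weighted_pow_sum_sub_le_secant_one_two hs hs1.le (hB.trans hBA).le hB.le hl
    have ht : ((2 : ℝ) ^ l 0)⁻¹ ≤ (2 ^ 3)⁻¹ := inv_pow_le_inv_pow_of_le one_le_two (by omega)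
    nlinarith [mul_neg_of_pos_of_neg (mul_pos hs0 (by linarith : 0 < A - B))
      (by norm_num at ht; linarith : ((2 : ℝ) ^ l 0)⁻¹ - 1 / 4 < 0)]

end FourSymbols

section ConstantTail

lemma expMoment_four (d p₁ q : ℝ) (l : Fin 4 → ℕ) :
    expMoment 4 d ![p₁, q, q, q] l = p₁ ^ (1 + d) * (2 ^ d) ^ l 0
      + q ^ (1 + d) * ((2 ^ d) ^ l 1 + (2 ^ d) ^ l 2 + (2 ^ d) ^ l 3) := by
  simp [expMoment, Fin.sum_univ_four, rpow_mul_natCast zero_le_two]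
  ring

lemma isCode_four_const_two : IsCode 4 fun _ => 2 :=
  ⟨fun _ => one_le_two, by norm_num [rpow_neg]⟩

variable {d p₁ q : ℝ} {l : Fin 4 → ℕ}

lemma half_le_two_rpow (hd : -1 ≤ d) : 1 / 2 ≤ (2 : ℝ) ^ d := by
  simpa [rpow_neg_one] using rpow_le_rpow_of_exponent_le one_le_two hd

lemma rpow_lt_two_mul_two_rpow_mul (hd : -1 < d) (hp₁ : 0 ≤ p₁) (hpq : p₁ < 2 * q) :
    p₁ ^ (1 + d) < 2 * 2 ^ d * q ^ (1 + d) :=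
  calc p₁ ^ (1 + d) < (2 * q) ^ (1 + d) := rpow_lt_rpow hp₁ hpq (by linarith)
    _ = 2 * 2 ^ d * q ^ (1 + d) := by
      rw [mul_rpow zero_le_two (by linarith), rpow_add two_pos, rpow_one]

lemma expMoment_four_le (hd : -1 < d) (hd0 : d < 0) (hqp : q < p₁) (hpq : p₁ < 2 * q)
    (hl : IsCode 4 l) :
    expMoment 4 d ![p₁, q, q, q] l ≤ expMoment 4 d ![p₁, q, q, q] fun _ => 2 := by
  have hq : 0 < q := by linarith
  rw [expMoment_four, expMoment_four]
  linarith [weighted_pow_sum_le (half_le_two_rpow hd.le)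
    (rpow_le_one_of_one_le_of_nonpos one_le_two hd0.le) (rpow_nonneg hq.le _)
    (rpow_lt_rpow hq.le hqp (by linarith)).le
    (rpow_lt_two_mul_two_rpow_mul hd (by linarith) hpq).le hl]

lemma head_eq_two_of_expMoment_four_eq (hd : -1 < d) (hd0 : d < 0) (hqp : q < p₁)
    (hpq : p₁ < 2 * q) (hl : IsCode 4 l)
    (heq : expMoment 4 d ![p₁, q, q, q] l = expMoment 4 d ![p₁, q, q, q] fun _ => 2) :
    l 0 = 2 := by
  by_contra h2
  rw [expMoment_four, expMoment_four] at heq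
  linarith [weighted_pow_sum_lt_of_head_ne_two (half_le_two_rpow hd.le)
    (rpow_lt_one_of_one_lt_of_neg one_lt_two hd0)
    (rpow_lt_rpow (by linarith) hqp (by linarith))
    (rpow_lt_two_mul_two_rpow_mul hd (by linarith) hpq) hl h2]

end ConstantTail

theorem stmt_14 (d : ℝ) (hd : -1 < d) (hd0 : d < 0)
    (p₁ : ℝ) (hp₁ : p₁ ∈ Set.Ioo (0.25 : ℝ) 0.4) :
    (∀ l : Fin 4 → ℕ, IsCode 4 l →
      expRedundancy 4 d ![p₁, (1 - p₁) / 3, (1 - p₁) / 3, (1 - p₁) / 3] l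
        = expRedundancyOpt 4 d ![p₁, (1 - p₁) / 3, (1 - p₁) / 3, (1 - p₁) / 3] →
      l 0 = 2) ∧
    ¬ ∃ l : Fin 4 → ℕ, IsCode 4 l ∧
      expRedundancy 4 d ![p₁, (1 - p₁) / 3, (1 - p₁) / 3, (1 - p₁) / 3] l
        = expRedundancyOpt 4 d ![p₁, (1 - p₁) / 3, (1 - p₁) / 3, (1 - p₁) / 3] ∧
      l 0 = 1 := by
  obtain ⟨h1, h2⟩ := hp₁
  have hqp : (1 - p₁) / 3 < p₁ := by norm_num at h1; linarith
  have hpq : p₁ < 2 * ((1 - p₁) / 3) := by norm_num at h2; linarith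
  have hp : ∀ i, 0 < ![p₁, (1 - p₁) / 3, (1 - p₁) / 3, (1 - p₁) / 3] i := by
    intro i; fin_cases i <;> simp <;> linarith
  have hopt (l : Fin 4 → ℕ) (hl : IsCode 4 l)
      (heq : expRedundancy 4 d ![p₁, (1 - p₁) / 3, (1 - p₁) / 3, (1 - p₁) / 3] l
        = expRedundancyOpt 4 d ![p₁, (1 - p₁) / 3, (1 - p₁) / 3, (1 - p₁) / 3]) : l 0 = 2 := by
    rw [expRedundancy_eq_opt_iff hd0 hp isCode_four_const_two
      (fun l hl => expMoment_four_le hd hd0 hqp hpq hl)] at heq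
    exact head_eq_two_of_expMoment_four_eq hd hd0 hqp hpq hl heq
  exact ⟨hopt, fun ⟨l, hl, heq, h0⟩ => absurd (hopt l hl heq) (by omega)⟩
end
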